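/- arXiv:2311.08060 — 4 statements merged into one kernel-verified Lean document; each statement's English description precedes it below -/
import Mathlib

section
/- Let n, t ∈ ℕ with 8 ≤ t < n and t divisible by 8. Every deterministic algorithm 𝒜 that solves weak consensus in the omission model (among n processes, tolerating up to t omission-faulty processes) has message complexity at least t²/32. -/
/-- A message: a sender, a (distinct) receiver and a round number. -/
structure Message (n : ℕ) where
  sender : Fin n
  receiver : Fin n
  round : ℕ
  ne : sender ≠ receiver

/-- A valid set of messages received by a process in state `s`:
every message has the right receiver and round, and there is
at most one message per sender. -/
def ValidRecv {n : ℕ} {St : Type} (proc : St → Fin n) (rnd : St → ℕ)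
    (s : St) (M : Set (Message n)) : Prop :=
  (∀ m ∈ M, m.receiver = proc s ∧ m.round = rnd s) ∧
  (∀ m ∈ M, ∀ m' ∈ M, m.sender = m'.sender → m = m')

/-- A deterministic algorithm in the synchronous (omission) model:
a type of local states recording a process, a round, a proposal and a
decision, initial states and initial messages for every proposal, and a
deterministic transition function. -/
structure Algorithm (n : ℕ) (Vi Vo : Type) where
  St : Type
  proc : St → Fin n
  rnd : St → ℕ
  prop : St → Vi
  dec : St → Option Vo
  init : Fin n → Vi → St
  initMsgs : Fin n → Vi → Set (Message n)
  trans : St → Set (Message n) → St × Set (Message n)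
  init_proc : ∀ i v, proc (init i v) = i
  init_rnd : ∀ i v, rnd (init i v) = 1
  init_prop : ∀ i v, prop (init i v) = v
  init_dec : ∀ i v, dec (init i v) = none
  initMsgs_sender : ∀ i v, ∀ m ∈ initMsgs i v, m.sender = i
  initMsgs_round : ∀ i v, ∀ m ∈ initMsgs i v, m.round = 1
  initMsgs_uniq : ∀ i v, ∀ m ∈ initMsgs i v, ∀ m' ∈ initMsgs i v,
    m.receiver = m'.receiver → m = m'
  trans_ok : ∀ s M, ValidRecv proc rnd s M →
    proc (trans s M).1 = proc s ∧
    rnd (trans s M).1 = rnd s + 1 ∧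
    prop (trans s M).1 = prop s ∧
    (dec s ≠ none → dec (trans s M).1 = dec s) ∧
    (∀ m ∈ (trans s M).2, m.sender = proc s ∧ m.round = rnd s + 1) ∧
    (∀ m ∈ (trans s M).2, ∀ m' ∈ (trans s M).2, m.receiver = m'.receiver → m = m')

/-- The data of an execution of algorithm `A`: the set of faulty
processes and, for every process and round, a state and the four sets of
sent, send-omitted, received and receive-omitted messages. -/
structure Exec {n : ℕ} {Vi Vo : Type} (A : Algorithm n Vi Vo) where
  faulty : Set (Fin n)
  st : Fin n → ℕ → A.St
  sent : Fin n → ℕ → Set (Message n)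
  sendOmit : Fin n → ℕ → Set (Message n)
  recvd : Fin n → ℕ → Set (Message n)
  recvOmit : Fin n → ℕ → Set (Message n)

/-- `j` is one of the rounds `1, …, k` (where `k ∈ ℕ ∪ {∞}`). -/
def InHorizon (k : ℕ∞) (j : ℕ) : Prop := 1 ≤ j ∧ (j : ℕ∞) ≤ k

/-- `E` is a `k`-round execution of `A` with at most `t` faulty processes. -/
def IsExec {n : ℕ} {Vi Vo : Type} (t : ℕ) (A : Algorithm n Vi Vo) (k : ℕ∞)
    (E : Exec A) : Prop :=
  -- at most `t` faulty processes
  E.faulty.encard ≤ (t : ℕ∞) ∧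
  -- every process starts in one of its initial states, with
  -- sent ∪ send-omitted equal to its prescribed initial send set
  ((1 : ℕ∞) ≤ k → ∀ i, ∃ v, E.st i 1 = A.init i v ∧
      E.sent i 1 ∪ E.sendOmit i 1 = A.initMsgs i v) ∧
  -- later states and sent ∪ send-omitted sets are obtained by the transition function
  (∀ i j, 1 ≤ j → ((j + 1 : ℕ) : ℕ∞) ≤ k →
      A.trans (E.st i j) (E.recvd i j)
        = (E.st i (j + 1), E.sent i (j + 1) ∪ E.sendOmit i (j + 1))) ∧
  -- per-round well-formedness (fragments)
  (∀ i j, InHorizon k j →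
      A.proc (E.st i j) = i ∧ A.rnd (E.st i j) = j ∧
      (∀ m ∈ E.sent i j ∪ E.sendOmit i j, m.sender = i ∧ m.round = j) ∧
      (∀ m ∈ E.recvd i j ∪ E.recvOmit i j, m.receiver = i ∧ m.round = j) ∧
      E.sent i j ∩ E.sendOmit i j = ∅ ∧
      E.recvd i j ∩ E.recvOmit i j = ∅ ∧
      (∀ m ∈ E.sent i j ∪ E.sendOmit i j, ∀ m' ∈ E.sent i j ∪ E.sendOmit i j,
        m.receiver = m'.receiver → m = m') ∧
      (∀ m ∈ E.recvd i j ∪ E.recvOmit i j, ∀ m' ∈ E.recvd i j ∪ E.recvOmit i j,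
        m.sender = m'.sender → m = m')) ∧
  -- send-validity
  (∀ i j, InHorizon k j → ∀ m ∈ E.sent i j,
      m ∈ E.recvd m.receiver j ∪ E.recvOmit m.receiver j) ∧
  -- receive-validity
  (∀ i j, InHorizon k j → ∀ m ∈ E.recvd i j ∪ E.recvOmit i j, m ∈ E.sent m.sender j) ∧
  -- omission-validity
  (∀ i, (∃ j, InHorizon k j ∧ (E.sendOmit i j ≠ ∅ ∨ E.recvOmit i j ≠ ∅)) → i ∈ E.faulty)

/-- Process `i` proposes `v` in `E`. -/
def Proposes {n : ℕ} {Vi Vo : Type} {A : Algorithm n Vi Vo}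
    (E : Exec A) (i : Fin n) (v : Vi) : Prop :=
  A.prop (E.st i 1) = v

/-- Process `i` decides `v` in the `k`-round execution `E`. -/
def Decides {n : ℕ} {Vi Vo : Type} {A : Algorithm n Vi Vo}
    (k : ℕ∞) (E : Exec A) (i : Fin n) (v : Vo) : Prop :=
  ∃ j, InHorizon k j ∧ A.dec (E.st i j) = some v

/-- The number of messages sent (not send-omitted) by correct processes in `E`. -/
noncomputable def msgCount {n : ℕ} {Vi Vo : Type} {A : Algorithm n Vi Vo}
    (E : Exec A) : ℕ∞ :=
  {m : Message n | ∃ i, i ∉ E.faulty ∧ ∃ j, 1 ≤ j ∧ m ∈ E.sent i j}.encard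

/-- The message complexity of `A`: the supremum, over all infinite
executions of `A` (with at most `t` faulty processes), of the number of
messages sent by correct processes. -/
noncomputable def MsgComplexity {n : ℕ} {Vi Vo : Type} (t : ℕ)
    (A : Algorithm n Vi Vo) : ℕ∞ :=
  ⨆ E : {E : Exec A // IsExec t A ⊤ E}, msgCount E.1

/-- Two `k`-round executions are indistinguishable to process `i`: it has the
same proposal and receives exactly the same messages in every round of both. -/
def Indist {n : ℕ} {Vi Vo : Type} {A : Algorithm n Vi Vo}
    (k : ℕ∞) (E E' : Exec A) (i : Fin n) : Prop :=
  A.prop (E.st i 1) = A.prop (E'.st i 1) ∧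
  ∀ j, InHorizon k j → E.recvd i j = E'.recvd i j

/-- Group `G ⊊ Π` of at most `t` processes is isolated from round `k` in the
infinite execution `E`: every process of `G` is faulty, send-omits no message,
and receive-omits exactly those messages sent to it in rounds `≥ k` by
processes outside `G`. -/
def IsolatedFrom {n : ℕ} {Vi Vo : Type} {A : Algorithm n Vi Vo}
    (t : ℕ) (E : Exec A) (G : Set (Fin n)) (k : ℕ) : Prop :=
  G ≠ Set.univ ∧ G.encard ≤ (t : ℕ∞) ∧
  ∀ g ∈ G, g ∈ E.faulty ∧
    (∀ j, 1 ≤ j → E.sendOmit g j = ∅) ∧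
    (∀ j, 1 ≤ j → E.recvOmit g j
      = {m | m.receiver = g ∧ m.sender ∉ G ∧ k ≤ j ∧ m ∈ E.sent m.sender j})

/-- `A` solves (binary) weak consensus in the omission model, tolerating `t`
omission-faulty processes: every infinite execution satisfies Termination,
Agreement and Weak Validity. -/
def SolvesWeakConsensus {n : ℕ} (t : ℕ) (A : Algorithm n Bool Bool) : Prop :=
  ∀ E : Exec A, IsExec t A ⊤ E →
    -- Termination
    (∀ i, i ∉ E.faulty → ∃ b, Decides ⊤ E i b) ∧
    -- Agreement
    (∀ i i' b b', i ∉ E.faulty → i' ∉ E.faulty →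
      Decides ⊤ E i b → Decides ⊤ E i' b' → b = b') ∧
    -- Weak Validity
    (E.faulty = ∅ → ∀ b : Bool, (∀ i, Proposes E i b) → ∀ i, ¬ Decides ⊤ E i (!b))


/-!
Suppose every execution has fewer than `c = t² / 32 = 2a²` messages sent by correct processes,
where `t = 8a`. Fix a group `G` of `2a` processes and look at runs in which only members of `G`
lose messages, all on receipt. A member `g ∈ G` that loses at most `4a` messages from outside `G`
cannot distinguish such a run from an execution in which the rest of `G` and the at most `4a`
senders of those messages are faulty, the latter send-omitting to `g`. There `g` is correct, so it
decides like the processes outside `G`. In two such runs fewer than `4a²` messages are lost from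
outside `G` altogether, so any `2a - 1` members of `G` contain a `g` that is quiet in both: two
runs in which these members behave identically have the same decision outside `G`.

Isolating `G` from round `k` instead of `k + 1` amounts to losing its round-`k` messages one at a
time, and each loss changes the run of a single member of `G` only. Hence the decision outside `G`
with `G` isolated from the start equals the failure-free decision. But when `G` is isolated from
the start, its members only see their own proposals, so changing the proposal of one process
outside `G` cannot change the failure-free decision. Changing the proposals from all `false` to
all `true` one process at a time then contradicts Weak Validity.
-/

theorem Nat.exists_lt_apply_ne_apply_succ {α : Type*} {f : ℕ → α} {N : ℕ} (h : f 0 ≠ f N) :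
    ∃ m < N, f m ≠ f (m + 1) := by
  contrapose! h
  induction N with
  | zero => rfl
  | succ N ih => rw [ih fun m hm => h m (by omega), h N (by omega)]

theorem Finset.exists_encard_add_encard_le {ι α : Type*} {s : Finset ι} {f₁ f₂ : ι → Set α}
    {q : ℕ∞} (h₁ : (s : Set ι).PairwiseDisjoint f₁) (h₂ : (s : Set ι).PairwiseDisjoint f₂)
    (hlt : (⋃ i ∈ s, f₁ i).encard + (⋃ i ∈ s, f₂ i).encard < s.card * (q + 1)) :
    ∃ i ∈ s, (f₁ i).encard + (f₂ i).encard ≤ q := by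
  by_contra! h
  rw [← Finset.set_biUnion_coe, ← Finset.set_biUnion_coe, s.finite_toSet.encard_biUnion h₁,
    s.finite_toSet.encard_biUnion h₂, finsum_mem_coe_finset, finsum_mem_coe_finset,
    ← Finset.sum_add_distrib] at hlt
  refine hlt.not_ge ?_
  rw [← nsmul_eq_mul]
  exact Finset.card_nsmul_le_sum s _ _ fun i hi => Order.add_one_le_of_lt (h i hi)

namespace Algorithm

section Run

variable {n : ℕ} {Vi Vo : Type} (A : Algorithm n Vi Vo)

/-- The run of `A` in which processes propose `v` and exactly the messages of `D` are lost:
`A.run v D j i` is the state of `i` in round `j + 1` together with the messages it is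
prescribed to send in that round. -/
def run (v : Fin n → Vi) (D : Set (Message n)) : ℕ → Fin n → A.St × Set (Message n)
  | 0 => fun i => (A.init i (v i), A.initMsgs i (v i))
  | j + 1 => fun i =>
      A.trans (run v D j i).1 {m | m.receiver = i ∧ m ∈ (run v D j m.sender).2 ∧ m ∉ D}

def delivered (v : Fin n → Vi) (D : Set (Message n)) (j : ℕ) (i : Fin n) : Set (Message n) :=
  {m | m.receiver = i ∧ m ∈ (A.run v D j m.sender).2 ∧ m ∉ D}

/-- The execution of `A.run v D` with faulty processes `F`, in which the lost messages in `S` are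
send-omitted and the other lost messages are receive-omitted. -/
def toExec (F : Set (Fin n)) (v : Fin n → Vi) (D S : Set (Message n)) : Exec A where
  faulty := F
  st i j := (A.run v D (j - 1) i).1
  sent i j := (A.run v D (j - 1) i).2 \ S
  sendOmit i j := (A.run v D (j - 1) i).2 ∩ S
  recvd i j := A.delivered v D (j - 1) i
  recvOmit i j := {m | m.receiver = i ∧ m ∈ (A.run v D (j - 1) m.sender).2 \ S ∧ m ∈ D}

variable {A} {v : Fin n → Vi} {D : Set (Message n)}

theorem run_succ (j : ℕ) (i : Fin n) :
    A.run v D (j + 1) i = A.trans (A.run v D j i).1 (A.delivered v D j i) :=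
  rfl

theorem validRecv_delivered_of {j : ℕ} (hproc : ∀ i, A.proc (A.run v D j i).1 = i)
    (hrnd : ∀ i, A.rnd (A.run v D j i).1 = j + 1)
    (hout : ∀ i, ∀ m ∈ (A.run v D j i).2, m.sender = i ∧ m.round = j + 1)
    (hinj : ∀ i, ∀ m ∈ (A.run v D j i).2, ∀ m' ∈ (A.run v D j i).2,
      m.receiver = m'.receiver → m = m') (i : Fin n) :
    ValidRecv A.proc A.rnd (A.run v D j i).1 (A.delivered v D j i) := by
  refine ⟨fun m ⟨hr, hm, _⟩ => ⟨hr.trans (hproc i).symm, ?_⟩, ?_⟩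
  · rw [(hout _ m hm).2, hrnd]
  · rintro m ⟨hr, hm, -⟩ m' ⟨hr', hm', -⟩ hs
    exact hinj _ m hm m' (hs ▸ hm') (hr.trans hr'.symm)

theorem run_wellFormed (j : ℕ) :
    (∀ i, A.proc (A.run v D j i).1 = i) ∧ (∀ i, A.rnd (A.run v D j i).1 = j + 1) ∧
    (∀ i, ∀ m ∈ (A.run v D j i).2, m.sender = i ∧ m.round = j + 1) ∧
    (∀ i, ∀ m ∈ (A.run v D j i).2, ∀ m' ∈ (A.run v D j i).2,
      m.receiver = m'.receiver → m = m') := by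
  induction j with
  | zero =>
    exact ⟨fun i => A.init_proc i (v i), fun i => A.init_rnd i (v i),
      fun i m hm => ⟨A.initMsgs_sender i (v i) m hm, A.initMsgs_round i (v i) m hm⟩,
      fun i => A.initMsgs_uniq i (v i)⟩
  | succ j ih =>
    obtain ⟨hproc, hrnd, hout, hinj⟩ := ih
    have trans_ok i := A.trans_ok _ _ (validRecv_delivered_of hproc hrnd hout hinj i)
    refine ⟨fun i => ?_, fun i => ?_, fun i m hm => ?_, fun i => (trans_ok i).2.2.2.2.2⟩
    · rw [run_succ, (trans_ok i).1, hproc]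
    · rw [run_succ, (trans_ok i).2.1, hrnd]
    · rw [← hproc i, ← hrnd i]
      exact (trans_ok i).2.2.2.2.1 m hm

theorem proc_run (j : ℕ) (i : Fin n) : A.proc (A.run v D j i).1 = i :=
  (run_wellFormed j).1 i

theorem rnd_run (j : ℕ) (i : Fin n) : A.rnd (A.run v D j i).1 = j + 1 :=
  (run_wellFormed j).2.1 i

theorem sender_round_of_mem_run {j : ℕ} {i : Fin n} {m : Message n}
    (hm : m ∈ (A.run v D j i).2) : m.sender = i ∧ m.round = j + 1 :=
  (run_wellFormed j).2.2.1 i m hm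

theorem eq_of_mem_run_of_receiver_eq {j : ℕ} {i : Fin n} {m m' : Message n}
    (hm : m ∈ (A.run v D j i).2) (hm' : m' ∈ (A.run v D j i).2)
    (h : m.receiver = m'.receiver) : m = m' :=
  (run_wellFormed j).2.2.2 i m hm m' hm' h

theorem validRecv_delivered (j : ℕ) (i : Fin n) :
    ValidRecv A.proc A.rnd (A.run v D j i).1 (A.delivered v D j i) :=
  validRecv_delivered_of (proc_run j) (rnd_run j) (fun _ _ => sender_round_of_mem_run)
    (fun _ _ hm _ hm' => eq_of_mem_run_of_receiver_eq hm hm') i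

theorem isExec_toExec {t : ℕ} {F : Set (Fin n)} {S : Set (Message n)}
    (hF : F.encard ≤ t) (hSD : S ⊆ D)
    (hS : ∀ j i, ∀ m ∈ (A.run v D j i).2, m ∈ S → i ∈ F) (hD : ∀ m ∈ D \ S, m.receiver ∈ F) :
    IsExec t A ⊤ (A.toExec F v D S) := by
  have hpos {j : ℕ} (hj : 1 ≤ j) : ∃ k, j = k + 1 := ⟨j - 1, by omega⟩
  refine ⟨hF, fun _ i => ⟨v i, rfl, Set.sdiff_union_inter _ _⟩, ?_, ?_, ?_, ?_, ?_⟩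
  · intro i j hj _
    obtain ⟨j, rfl⟩ := hpos hj
    simp only [toExec, Nat.add_sub_cancel, Set.sdiff_union_inter]
    rfl
  · rintro i j hj
    obtain ⟨j, rfl⟩ := hpos hj.1
    simp only [toExec, Nat.add_sub_cancel]
    rw [Set.sdiff_union_inter]
    refine ⟨proc_run j i, rnd_run j i, fun m => sender_round_of_mem_run, ?_,
      Set.disjoint_iff_inter_eq_empty.1 Set.disjoint_sdiff_inter, ?_,
      fun m hm m' hm' => eq_of_mem_run_of_receiver_eq hm hm', ?_⟩
    · rintro m (⟨hr, hm, -⟩ | ⟨hr, hm, -⟩)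
      exacts [⟨hr, (sender_round_of_mem_run hm).2⟩, ⟨hr, (sender_round_of_mem_run hm.1).2⟩]
    · exact Set.eq_empty_iff_forall_notMem.2 fun m ⟨⟨_, _, h₁⟩, ⟨_, _, h₂⟩⟩ => h₁ h₂
    · rintro m (⟨hr, hm, -⟩ | ⟨hr, ⟨hm, -⟩, -⟩) m' (⟨hr', hm', -⟩ | ⟨hr', ⟨hm', -⟩, -⟩) hs <;>
        exact eq_of_mem_run_of_receiver_eq hm (hs ▸ hm') (hr.trans hr'.symm)
  · intro i j _ m hm
    obtain rfl := (sender_round_of_mem_run hm.1).1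
    by_cases hmD : m ∈ D
    exacts [Or.inr ⟨rfl, hm, hmD⟩, Or.inl ⟨rfl, hm.1, hmD⟩]
  · rintro i j _ m (⟨-, hm, hmD⟩ | ⟨-, hm, -⟩)
    exacts [⟨hm, fun hmS => hmD (hSD hmS)⟩, hm]
  · rintro i ⟨j, -, hne | hne⟩ <;> obtain ⟨m, hm⟩ := Set.nonempty_iff_ne_empty.2 hne
    · exact hS _ i m hm.1 hm.2
    · obtain ⟨rfl, ⟨-, hmS⟩, hmD⟩ := hm
      exact hD m ⟨hmD, hmS⟩

theorem isExec_toExec_failureFree {t : ℕ} : IsExec t A ⊤ (A.toExec ∅ v ∅ ∅) :=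
  isExec_toExec (by simp) le_rfl (fun _ _ _ _ h => h.elim) (fun _ h => h.1.elim)

theorem isExec_toExec_of_receiver_mem {t : ℕ} {G : Finset (Fin n)} (hG : G.card ≤ t)
    (hD : ∀ m ∈ D, m.receiver ∈ G) : IsExec t A ⊤ (A.toExec G v D ∅) :=
  isExec_toExec (by simpa using hG) (Set.empty_subset D) (fun _ _ _ _ h => h.elim)
    (fun m hm => hD m hm.1)

theorem decides_toExec_iff {F : Set (Fin n)} {S : Set (Message n)} {i : Fin n} {b : Vo} :
    Decides ⊤ (A.toExec F v D S) i b ↔ ∃ j, A.dec (A.run v D j i).1 = some b :=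
  ⟨fun ⟨j, _, h⟩ => ⟨j - 1, h⟩, fun ⟨j, h⟩ => ⟨j + 1, ⟨le_add_self, le_top⟩, h⟩⟩

theorem dec_run_of_le {j k : ℕ} {i : Fin n} {b : Vo} (hjk : j ≤ k)
    (h : A.dec (A.run v D j i).1 = some b) : A.dec (A.run v D k i).1 = some b := by
  induction k, hjk using Nat.le_induction with
  | base => exact h
  | succ k _ ih =>
    rw [run_succ, (A.trans_ok _ _ (validRecv_delivered k i)).2.2.2.1 (by simp [ih]), ih]

theorem eq_of_dec_run {j k : ℕ} {i : Fin n} {b b' : Vo} (h : A.dec (A.run v D j i).1 = some b)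
    (h' : A.dec (A.run v D k i).1 = some b') : b = b' := by
  have := dec_run_of_le (le_max_left j k) h
  rwa [dec_run_of_le (le_max_right j k) h', Option.some_inj, eq_comm] at this

theorem run_eq_of_lost_iff {v' : Fin n → Vi} {D' : Set (Message n)}
    (I : ℕ → Set (Fin n)) (hI : ∀ j, I (j + 1) ⊆ I j) (hv : ∀ i ∈ I 0, v i = v' i)
    (hin : ∀ j (m : Message n), m.receiver ∈ I (j + 1) → m.sender ∈ I j → m.round = j + 1 →
      (m ∈ D ↔ m ∈ D'))
    (hout : ∀ j (m : Message n), m.receiver ∈ I (j + 1) → m.sender ∉ I j → m.round = j + 1 →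
      m ∈ D ∧ m ∈ D') :
    ∀ j, ∀ i ∈ I j, A.run v D j i = A.run v' D' j i := by
  intro j
  induction j with
  | zero =>
    intro i hi
    simp only [run, hv i hi]
  | succ j ih =>
    intro i hi
    rw [run_succ, run_succ, ih i (hI j hi)]
    congr 1
    ext m
    change m.receiver = i ∧ m ∈ (A.run v D j m.sender).2 ∧ m ∉ D ↔
      m.receiver = i ∧ m ∈ (A.run v' D' j m.sender).2 ∧ m ∉ D'
    by_cases hs : m.sender ∈ I j
    · rw [ih _ hs]
      constructor <;> rintro ⟨rfl, hm, hmD⟩ <;> refine ⟨rfl, hm, ?_⟩ <;>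
        simpa [hin j m hi hs (sender_round_of_mem_run hm).2] using hmD
    · constructor <;> rintro ⟨rfl, hm, hmD⟩
      exacts [(hmD (hout j m hi hs (sender_round_of_mem_run hm).2).1).elim,
        (hmD (hout j m hi hs (sender_round_of_mem_run hm).2).2).elim]

theorem run_eq_of_lost_iff_of_round_le {D' : Set (Message n)} {r : ℕ}
    (h : ∀ m : Message n, m.round ≤ r → (m ∈ D ↔ m ∈ D')) :
    ∀ j ≤ r, ∀ i, A.run v D j i = A.run v D' j i := fun j hj i =>
  run_eq_of_lost_iff (fun j => {_i | j ≤ r}) (fun j _ (hj : j + 1 ≤ r) => show j ≤ r by omega)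
    (fun _ _ => rfl) (fun _ m (hj : _ ≤ r) _ hm => h m (hm ▸ hj))
    (fun j _ (hj : j + 1 ≤ r) hs _ => (hs (show j ≤ r by omega)).elim) j i hj

theorem run_eq_of_isolated {v' : Fin n → Vi} {D' : Set (Message n)} {g : Fin n}
    (hD : ∀ m : Message n, m.receiver = g → m ∈ D)
    (hD' : ∀ m : Message n, m.receiver = g → m ∈ D') (hv : v g = v' g) (j : ℕ) :
    A.run v D j g = A.run v' D' j g :=
  run_eq_of_lost_iff (fun _ => {g}) (fun _ => le_rfl) (fun _ hi => hi ▸ hv)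
    (fun _ m hr hs _ => absurd (hs.trans hr.symm) m.ne)
    (fun _ m hr _ _ => ⟨hD m hr, hD' m hr⟩) j g rfl

theorem run_insert_eq {mq : Message n} {k : ℕ} {g : Fin n} (hmq : mq.round = k)
    (hg : mq.receiver ≠ g) (hD : ∀ m : Message n, m.receiver = g → k < m.round → m ∈ D)
    (j : ℕ) : A.run v (insert mq D) j g = A.run v D j g := by
  refine run_eq_of_lost_iff (fun j => {i | i = g ∨ j < k}) (fun j i hi => ?_)
    (fun _ _ => rfl) (fun j m hr _ hround => ?_) (fun j m hr hs hround => ?_) j g (Or.inl rfl)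
  · exact hi.imp_right fun h => by omega
  · have : m ≠ mq := by
      rintro rfl
      rcases hr with hr | hr
      exacts [hg hr, by omega]
    simp [this]
  · simp only [Set.mem_ofPred_eq, not_or] at hs hr
    have hrg : m.receiver = g := hr.resolve_right (by omega)
    exact ⟨Set.mem_insert_of_mem _ (hD m hrg (by omega)), hD m hrg (by omega)⟩

end Run

section Decision

variable {n : ℕ} {Vi : Type} {A : Algorithm n Vi Bool} {v : Fin n → Vi} {D : Set (Message n)}

open Classical in
/-- The value that `i` decides in `A.run v D`, or `false` if it never decides. -/
noncomputable def runDecision (A : Algorithm n Vi Bool) (v : Fin n → Vi) (D : Set (Message n))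
    (i : Fin n) : Bool :=
  decide (∃ j, A.dec (A.run v D j i).1 = some true)

theorem runDecision_eq {j : ℕ} {i : Fin n} {b : Bool} (h : A.dec (A.run v D j i).1 = some b) :
    A.runDecision v D i = b := by
  cases b
  · simpa [runDecision] using fun k hk => Bool.false_ne_true (eq_of_dec_run h hk)
  · simpa [runDecision] using ⟨j, h⟩

theorem runDecision_congr {v' : Fin n → Vi} {D' : Set (Message n)} {i : Fin n}
    (h : ∀ j, A.run v D j i = A.run v' D' j i) : A.runDecision v D i = A.runDecision v' D' i := by
  simp only [runDecision, decide_eq_decide, h]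

end Decision

section Isolation

variable {n : ℕ} {Vi Vo : Type} {A : Algorithm n Vi Vo} {v : Fin n → Vi} {D : Set (Message n)}

def inboundFrom (G : Finset (Fin n)) (k : ℕ) : Set (Message n) :=
  {m | m.receiver ∈ G ∧ k ≤ m.round}

variable (A) in
def lostFromOutside (v : Fin n → Vi) (D : Set (Message n)) (G : Finset (Fin n)) (g : Fin n) :
    Set (Message n) :=
  {m ∈ D | m.receiver = g ∧ m.sender ∉ G ∧ m ∈ (A.run v D (m.round - 1) m.sender).2}

theorem lostFromOutside_subset {G : Finset (Fin n)} (g : Fin n) :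
    A.lostFromOutside v D G g ⊆
      {m | ∃ i, i ∉ (A.toExec G v D ∅).faulty ∧ ∃ j, 1 ≤ j ∧ m ∈ (A.toExec G v D ∅).sent i j} :=
  fun m ⟨_, _, hs, hm⟩ => ⟨m.sender, hs, m.round,
    by have := (sender_round_of_mem_run hm).2; omega, hm, Set.notMem_empty m⟩

theorem pairwiseDisjoint_lostFromOutside (G : Finset (Fin n)) (s : Set (Fin n)) :
    s.PairwiseDisjoint (A.lostFromOutside v D G) :=
  fun _ _ _ _ hne => Set.disjoint_left.2 fun _ ⟨_, h, _⟩ ⟨_, h', _⟩ => hne (h.symm.trans h')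

end Isolation

end Algorithm

namespace SolvesWeakConsensus

open Algorithm

variable {n t c : ℕ} {A : Algorithm n Bool Bool} {v : Fin n → Bool} {D : Set (Message n)}

theorem exists_dec_run (hA : SolvesWeakConsensus t A) {F : Set (Fin n)} {S : Set (Message n)}
    (hE : IsExec t A ⊤ (A.toExec F v D S)) {i : Fin n} (hi : i ∉ F) :
    ∃ j b, A.dec (A.run v D j i).1 = some b := by
  obtain ⟨b, hb⟩ := (hA _ hE).1 i hi
  obtain ⟨j, hj⟩ := decides_toExec_iff.1 hb
  exact ⟨j, b, hj⟩

theorem runDecision_eq_of_correct (hA : SolvesWeakConsensus t A) {F : Set (Fin n)}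
    {S : Set (Message n)} (hE : IsExec t A ⊤ (A.toExec F v D S)) {i i' : Fin n} (hi : i ∉ F)
    (hi' : i' ∉ F) : A.runDecision v D i = A.runDecision v D i' := by
  obtain ⟨b, hb⟩ := (hA _ hE).1 i hi
  obtain ⟨b', hb'⟩ := (hA _ hE).1 i' hi'
  obtain ⟨j, hj⟩ := decides_toExec_iff.1 hb
  obtain ⟨j', hj'⟩ := decides_toExec_iff.1 hb'
  rw [runDecision_eq hj, runDecision_eq hj', (hA _ hE).2.1 i i' b b' hi hi' hb hb']

theorem runDecision_eq_of_forall_eq (hA : SolvesWeakConsensus t A) {b : Bool}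
    (hv : ∀ i, v i = b) (i : Fin n) : A.runDecision v ∅ i = b := by
  have hE : IsExec t A ⊤ (A.toExec ∅ v ∅ ∅) := isExec_toExec_failureFree
  obtain ⟨c, hc⟩ := (hA _ hE).1 i (Set.notMem_empty i)
  have hcb : c = b := by
    by_contra hne
    exact (hA _ hE).2.2 rfl b (fun i => (A.init_prop i (v i)).trans (hv i)) i
      (Bool.eq_not_iff.2 hne ▸ hc)
  obtain ⟨j, hj⟩ := decides_toExec_iff.1 hc
  rw [runDecision_eq hj, hcb]

/-- Making the rest of `G` and the senders of the messages that `g` loses from outside `G`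
faulty, the latter send-omitting to `g`, gives a valid execution of the same run in which `g` is
correct. -/
theorem runDecision_eq_of_encard_lostFromOutside_le (hA : SolvesWeakConsensus t A)
    (htn : t < n) {G : Finset (Fin n)} {q : ℕ} (hGq : G.card + q ≤ t)
    (hD : ∀ m ∈ D, m.receiver ∈ G) {g w : Fin n} (hg : g ∈ G) (hw : w ∉ G)
    (hq : (A.lostFromOutside v D G g).encard ≤ q) :
    A.runDecision v D g = A.runDecision v D w := by
  set senders := Message.sender '' A.lostFromOutside v D G g
  set F : Set (Fin n) := ↑(G.erase g) ∪ senders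
  have hsenders : senders.encard ≤ q := (Set.encard_image_le _ _).trans hq
  have hF : F.encard ≤ t := calc
    F.encard ≤ (G.erase g).card + q :=
      (Set.encard_union_le _ _).trans
        (add_le_add (Set.encard_coe_eq_coe_finsetCard _).le hsenders)
    _ ≤ t := by rw [Finset.card_erase_of_mem hg]; exact_mod_cast (by omega)
  have hE' : IsExec t A ⊤ (A.toExec F v D {m ∈ D | m.receiver = g}) := by
    refine isExec_toExec hF (Set.sep_subset _ _) (fun j i m hm ⟨hmD, hmg⟩ => ?_)
      (fun m ⟨hmD, hmg⟩ => Or.inl (Finset.mem_erase.2 ⟨fun h => hmg ⟨hmD, h⟩, hD m hmD⟩))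
    obtain ⟨rfl, hround⟩ := sender_round_of_mem_run hm
    by_cases hs : m.sender ∈ G
    · exact Or.inl (Finset.mem_erase.2 ⟨fun h => m.ne (h.trans hmg.symm), hs⟩)
    · exact Or.inr ⟨m, ⟨hmD, hmg, hs, by rwa [hround]⟩, rfl⟩
  have hgF : g ∉ F := by
    rintro (h | ⟨m, ⟨-, hmg, hs, -⟩, rfl⟩)
    · simp at h
    · exact hs (hmg ▸ hg)
  obtain ⟨w', hw'⟩ : ∃ w', w' ∉ (G : Set (Fin n)) ∪ senders := by
    rw [← Set.ne_univ_iff_exists_notMem]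
    intro huniv
    have : (n : ℕ∞) ≤ G.card + q := calc
      (n : ℕ∞) = (Set.univ : Set (Fin n)).encard := by simp
      _ = _ := by rw [huniv]
      _ ≤ _ := (Set.encard_union_le _ _).trans (add_le_add (by simp) hsenders)
    have : n ≤ G.card + q := by exact_mod_cast this
    omega
  have hw'F : w' ∉ F := fun h => hw' (h.imp (fun h' => Finset.mem_of_mem_erase h') id)
  calc A.runDecision v D g = A.runDecision v D w' := hA.runDecision_eq_of_correct hE' hgF hw'F
    _ = A.runDecision v D w :=
      hA.runDecision_eq_of_correct (isExec_toExec_of_receiver_mem (by omega) hD)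
        (fun h => hw' (Or.inl h)) hw

/-- By pigeonhole, cheap executions leave some `g ∈ G'` that loses few messages from outside `G`
in both runs; `g` then decides like the processes outside `G` in both. -/
theorem runDecision_eq_of_run_eqOn (hA : SolvesWeakConsensus t A) (htn : t < n)
    (hcheap : ∀ E, IsExec t A ⊤ E → msgCount E < c) {G G' : Finset (Fin n)} {q : ℕ}
    (hGq : G.card + q ≤ t) (hG' : G' ⊆ G) (hc : 2 * c ≤ G'.card * (q + 1))
    {v' : Fin n → Bool} {D' : Set (Message n)} (hD : ∀ m ∈ D, m.receiver ∈ G)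
    (hD' : ∀ m ∈ D', m.receiver ∈ G) (heq : ∀ g ∈ G', ∀ j, A.run v D j g = A.run v' D' j g)
    {w : Fin n} (hw : w ∉ G) : A.runDecision v D w = A.runDecision v' D' w := by
  have hlost {v : Fin n → Bool} {D : Set (Message n)} (hD : ∀ m ∈ D, m.receiver ∈ G) :
      (⋃ g ∈ G', A.lostFromOutside v D G g).encard < c :=
    (Set.encard_mono (Set.iUnion₂_subset fun g _ => lostFromOutside_subset g)).trans_lt
      (hcheap _ (isExec_toExec_of_receiver_mem (by omega) hD))
  obtain ⟨g, hg, hsum⟩ := Finset.exists_encard_add_encard_le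
    (pairwiseDisjoint_lostFromOutside G _) (pairwiseDisjoint_lostFromOutside G _) <| calc
      _ < (c : ℕ∞) + c := ENat.add_lt_add (hlost hD) (hlost hD')
      _ ≤ G'.card * (q + 1) := by exact_mod_cast (by omega : c + c ≤ G'.card * (q + 1))
  calc A.runDecision v D w = A.runDecision v D g :=
        (hA.runDecision_eq_of_encard_lostFromOutside_le htn hGq hD (hG' hg) hw
          (le_self_add.trans hsum)).symm
    _ = A.runDecision v' D' g := runDecision_congr (heq g hg)
    _ = A.runDecision v' D' w :=
        hA.runDecision_eq_of_encard_lostFromOutside_le htn hGq hD' (hG' hg) hw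
          (le_add_self.trans hsum)

theorem runDecision_inboundFrom_succ (hA : SolvesWeakConsensus t A) (htn : t < n)
    (hcheap : ∀ E, IsExec t A ⊤ E → msgCount E < c) {G : Finset (Fin n)} {q : ℕ}
    (hGq : G.card + q ≤ t) (hc : 2 * c ≤ (G.card - 1) * (q + 1)) {w : Fin n} (hw : w ∉ G)
    (k : ℕ) : A.runDecision v (inboundFrom G (k + 1)) w = A.runDecision v (inboundFrom G k) w := by
  set roundk : Set (Message n) := {m | m.receiver ∈ G ∧ m.round = k}
  have hfin : roundk.Finite := by
    refine Set.Finite.of_finite_image (f := fun m => (m.sender, m.receiver)) (Set.toFinite _) ?_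
    rintro ⟨s, r, k₁, _⟩ ⟨-, h₁⟩ ⟨s', r', k₂, _⟩ ⟨-, h₂⟩ h
    simp_all
  have hsplit : inboundFrom G k = inboundFrom G (k + 1) ∪ roundk := by
    ext m
    simp only [inboundFrom, roundk, Set.mem_union, Set.mem_ofPred_eq, ← and_or_left]
    exact and_congr_right fun _ => by omega
  rw [hsplit]
  refine Set.Finite.induction_on_subset roundk hfin (by rw [Set.union_empty])
    (motive := fun T _ => A.runDecision v (inboundFrom G (k + 1)) w =
      A.runDecision v (inboundFrom G (k + 1) ∪ T) w) ?_
  intro mq T hmq hT _ ih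
  have hinto : ∀ m ∈ inboundFrom G (k + 1) ∪ T, m.receiver ∈ G :=
    fun m hm => hm.elim And.left fun hm => (hT hm).1
  rw [ih, Set.union_insert]
  refine hA.runDecision_eq_of_run_eqOn htn hcheap hGq (Finset.erase_subset mq.receiver G)
    (by rwa [Finset.card_erase_of_mem hmq.1]) hinto ?_ (fun g hg j => ?_) hw
  · exact Set.forall_mem_insert.2 ⟨hmq.1, hinto⟩
  · refine (run_insert_eq hmq.2 (Finset.ne_of_mem_erase hg).symm (fun m hmg hk => ?_) j).symm
    exact Or.inl ⟨hmg ▸ Finset.mem_of_mem_erase hg, hk⟩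

theorem runDecision_eq_inboundFrom_zero (hA : SolvesWeakConsensus t A) (htn : t < n)
    (hcheap : ∀ E, IsExec t A ⊤ E → msgCount E < c) {G : Finset (Fin n)} {q : ℕ}
    (hGq : G.card + q ≤ t) (hc : 2 * c ≤ (G.card - 1) * (q + 1)) {w : Fin n} (hw : w ∉ G) :
    A.runDecision v ∅ w = A.runDecision v (inboundFrom G 0) w := by
  obtain ⟨j, b, hj⟩ := hA.exists_dec_run (isExec_toExec_failureFree (v := v)) (Set.notMem_empty w)
  have hprefix : A.run v (inboundFrom G (j + 1)) j w = A.run v ∅ j w :=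
    run_eq_of_lost_iff_of_round_le (fun m hm => by simp [inboundFrom]; omega) j le_rfl w
  have hcut (k : ℕ) :
      A.runDecision v (inboundFrom G k) w = A.runDecision v (inboundFrom G 0) w := by
    induction k with
    | zero => rfl
    | succ k ih => rw [hA.runDecision_inboundFrom_succ htn hcheap hGq hc hw, ih]
  rw [← hcut (j + 1), runDecision_eq hj, runDecision_eq (hprefix ▸ hj)]

theorem runDecision_eq_of_eqOn (hA : SolvesWeakConsensus t A) (htn : t < n)
    (hcheap : ∀ E, IsExec t A ⊤ E → msgCount E < c) {G : Finset (Fin n)} {q : ℕ}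
    (hGq : G.card + q ≤ t) (hc : 2 * c ≤ (G.card - 1) * (q + 1)) {v' : Fin n → Bool}
    (hv : ∀ g ∈ G, v g = v' g) {w : Fin n} (hw : w ∉ G) :
    A.runDecision v ∅ w = A.runDecision v' ∅ w := by
  have hisolated {g : Fin n} (hg : g ∈ G) (m : Message n) (h : m.receiver = g) :
      m ∈ inboundFrom G 0 :=
    ⟨h ▸ hg, Nat.zero_le _⟩
  rw [hA.runDecision_eq_inboundFrom_zero htn hcheap hGq hc hw,
    hA.runDecision_eq_inboundFrom_zero htn hcheap hGq hc hw]
  exact hA.runDecision_eq_of_run_eqOn htn hcheap hGq subset_rfl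
    (hc.trans (Nat.mul_le_mul_right _ (Nat.sub_le _ _))) (fun _ h => h.1) (fun _ h => h.1)
    (fun g hg => run_eq_of_isolated (hisolated hg) (hisolated hg) (hv g hg)) hw

end SolvesWeakConsensus

theorem weak_consensus_message_lower_bound_general
    (n t : ℕ) (htn : t < n) (hdvd : 8 ∣ t)
    (A : Algorithm n Bool Bool) (hA : SolvesWeakConsensus t A) :
    ((t ^ 2 / 32 : ℕ) : ℕ∞) ≤ MsgComplexity t A := by
  obtain ⟨a, rfl⟩ := hdvd
  rw [show (8 * a) ^ 2 / 32 = 2 * a ^ 2 by ring_nf; omega]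
  by_contra! hlt
  have hcheap (E : Exec A) (hE : IsExec (8 * a) A ⊤ E) : msgCount E < (2 * a ^ 2 : ℕ) :=
    (le_iSup (fun E : {E // IsExec (8 * a) A ⊤ E} => msgCount E.1) ⟨E, hE⟩).trans_lt hlt
  obtain ⟨a, rfl⟩ : ∃ b, a = b + 1 :=
    Nat.exists_eq_add_one.2 <| Nat.pos_of_ne_zero <| by rintro rfl; simp at hlt
  let w : Fin n := ⟨0, by omega⟩
  let decision (m : ℕ) := A.runDecision (fun i : Fin n => decide (i.val < m)) ∅ w
  obtain ⟨m, hmn, hne⟩ := Nat.exists_lt_apply_ne_apply_succ (f := decision) (N := n) <| by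
    simp only [decision]
    rw [hA.runDecision_eq_of_forall_eq (b := false) (by simp) w,
      hA.runDecision_eq_of_forall_eq (b := true) (by simp) w]
    simp
  have hcard : 2 * (a + 1) ≤ (Finset.univ \ {⟨m, hmn⟩, w}).card := by
    have := Finset.le_card_sdiff {⟨m, hmn⟩, w} Finset.univ
    have := Finset.card_le_two (a := (⟨m, hmn⟩ : Fin n)) (b := w)
    rw [Finset.card_univ, Fintype.card_fin] at *
    omega
  obtain ⟨G, hG, hGcard⟩ := Finset.exists_subset_card_eq hcard
  have hc : 2 * (2 * (a + 1) ^ 2) ≤ (G.card - 1) * (4 * (a + 1) + 1) := by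
    rw [hGcard, show 2 * (a + 1) - 1 = 2 * a + 1 by omega]
    nlinarith
  refine hne <| hA.runDecision_eq_of_eqOn htn hcheap (q := 4 * (a + 1)) (by omega) hc
    (fun g hg => ?_) (fun h => by simpa using hG h)
  have : g.val ≠ m := fun h => by simpa [Fin.ext_iff, h] using hG hg
  simp only [decide_eq_decide]
  omega

/-- Every deterministic algorithm solving weak consensus in
the omission model (among `n` processes, tolerating up to `t` omission-faulty
processes, with `8 ≤ t < n` and `8 ∣ t`) has message complexity at least
`t² / 32`. -/
theorem weak_consensus_message_lower_bound
    (n t : ℕ) (ht8 : 8 ≤ t) (htn : t < n) (hdvd : 8 ∣ t)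
    (A : Algorithm n Bool Bool) (hA : SolvesWeakConsensus t A) :
    ((t ^ 2 / 32 : ℕ) : ℕ∞) ≤ MsgComplexity t A :=
  weak_consensus_message_lower_bound_general n t htn hdvd A hA
end

section
/- Let n, t ∈ ℕ with 8 ≤ t < n and t divisible by 8, and let 𝒜 solve weak consensus in the omission model with message complexity strictly less than t²/32. Let (X, Y, Z) be a partition of Π with |Y| = t/4 and |Z| ≤ t/4, and let E be an infinite execution of 𝒜 such that: the faulty set of E is Y ∪ Z (so exactly the processes of X are correct in E); all processes of X decide the same bit b_X in E; and group Y is isolated from some round k ∈ ℕ in E. Then there exists Y' ⊆ Y with |Y'| > |Y|/2 such that every process of Y' decides b_X in E. -/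
/-- The execution obtained from `E` by turning all messages receive-omitted by
`y` into send-omissions by their senders, with a new faulty set `F'`. -/
def cutExec {n : ℕ} {Vi Vo : Type} {A : Algorithm n Vi Vo} (E : Exec A)
    (y : Fin n) (F' : Set (Fin n)) : Exec A where
  faulty := F'
  st := E.st
  sent i j := E.sent i j \ E.recvOmit y j
  sendOmit i j := E.sendOmit i j ∪ (E.sent i j ∩ E.recvOmit y j)
  recvd := E.recvd
  recvOmit i j := {m ∈ E.recvOmit i j | m.receiver ≠ y}

theorem cutExec_isExec {n : ℕ} {Vi Vo : Type} {t : ℕ} {A : Algorithm n Vi Vo}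
    {E : Exec A} (hE : IsExec t A ⊤ E) (y : Fin n) (F' : Set (Fin n))
    (hcard : F'.encard ≤ (t : ℕ∞))
    (hySend : ∀ j, 1 ≤ j → E.sendOmit y j = ∅)
    (hF : ∀ i, i ∈ E.faulty → i ≠ y → i ∈ F')
    (hSend : ∀ i j, 1 ≤ j → (E.sent i j ∩ E.recvOmit y j).Nonempty → i ∈ F') :
    IsExec t A ⊤ (cutExec E y F') := by
  obtain ⟨hc, hinit, htrans, hwf, hsendv, hrecvv, homit⟩ := hE
  have hun : ∀ i j, (E.sent i j \ E.recvOmit y j) ∪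
      (E.sendOmit i j ∪ (E.sent i j ∩ E.recvOmit y j))
      = E.sent i j ∪ E.sendOmit i j := by
    intro i j
    ext m
    simp only [Set.mem_union, Set.mem_diff, Set.mem_inter_iff]
    tauto
  refine ⟨hcard, ?_, ?_, ?_, ?_, ?_, ?_⟩
  · intro hk i
    obtain ⟨v, h1, h2⟩ := hinit hk i
    exact ⟨v, h1, by simp only [cutExec]; rw [hun]; exact h2⟩
  · intro i j hj hjk
    have h := htrans i j hj hjk
    simp only [cutExec]
    rw [hun]
    exact h
  · intro i j hj
    obtain ⟨h1, h2, h3, h4, h5, h6, h7, h8⟩ := hwf i j hj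
    have h5' : ∀ m, m ∈ E.sent i j → m ∈ E.sendOmit i j → False := by
      intro m hm hm'
      have : m ∈ (∅ : Set (Message n)) := h5 ▸ ⟨hm, hm'⟩
      exact this.elim
    have h6' : ∀ m, m ∈ E.recvd i j → m ∈ E.recvOmit i j → False := by
      intro m hm hm'
      have : m ∈ (∅ : Set (Message n)) := h6 ▸ ⟨hm, hm'⟩
      exact this.elim
    refine ⟨h1, h2, ?_, ?_, ?_, ?_, ?_, ?_⟩
    · simp only [cutExec]; rw [hun]; exact h3
    · intro m hm
      refine h4 m ?_
      simp only [cutExec, Set.mem_union, Set.mem_setOf_eq] at hm ⊢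
      tauto
    · simp only [cutExec]
      ext m
      simp only [Set.mem_inter_iff, Set.mem_union, Set.mem_diff, Set.mem_setOf_eq,
        Set.mem_empty_iff_false, iff_false]
      rintro ⟨⟨hs, hno⟩, h | h⟩
      · exact h5' m hs h
      · exact hno h.2
    · simp only [cutExec]
      ext m
      simp only [Set.mem_inter_iff, Set.mem_setOf_eq, Set.mem_empty_iff_false, iff_false]
      rintro ⟨hr, hro, _⟩
      exact h6' m hr hro
    · simp only [cutExec]; rw [hun]; exact h7
    · intro m hm m' hm' hss
      refine h8 m ?_ m' ?_ hss <;>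
        · simp only [cutExec, Set.mem_union, Set.mem_setOf_eq] at hm hm' ⊢
          tauto
  · intro i j hj m hm
    simp only [cutExec, Set.mem_diff] at hm
    have h := hsendv i j hj m hm.1
    rcases h with h | h
    · exact Or.inl h
    · have hry : m.receiver ≠ y := by
        intro hry
        exact hm.2 (hry ▸ h)
      exact Or.inr ⟨h, hry⟩
  · intro i j hj m hm
    simp only [cutExec, Set.mem_union, Set.mem_setOf_eq] at hm
    have hmold : m ∈ E.recvd i j ∪ E.recvOmit i j := by
      rcases hm with h | h
      · exact Or.inl h
      · exact Or.inr h.1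
    have hs := hrecvv i j hj m hmold
    have hri : m.receiver = i := ((hwf i j hj).2.2.2.1 m hmold).1
    simp only [cutExec, Set.mem_diff]
    refine ⟨hs, ?_⟩
    intro hR
    have hry : m.receiver = y := (((hwf y j hj).2.2.2.1 m (Or.inr hR))).1
    have hiy : i = y := hri ▸ hry ▸ rfl
    subst hiy
    rcases hm with h | h
    · have h6 := (hwf i j hj).2.2.2.2.2.1
      have : m ∈ (∅ : Set (Message n)) := by
        rw [← h6]; exact ⟨h, hry ▸ hR⟩
      exact this.elim
    · exact h.2 hry
  · rintro i ⟨j, hj, h | h⟩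
    · simp only [cutExec] at h
      rcases Set.nonempty_iff_ne_empty.mpr h with ⟨m, hm | hm⟩
      · have hif : i ∈ E.faulty := homit i ⟨j, hj, Or.inl (Set.nonempty_iff_ne_empty.mp ⟨m, hm⟩)⟩
        have hiy : i ≠ y := by
          rintro rfl
          rw [hySend j hj.1] at hm
          exact hm
        exact hF i hif hiy
      · exact hSend i j hj.1 ⟨m, hm⟩
    · simp only [cutExec] at h
      obtain ⟨m, hm, hmy⟩ := Set.nonempty_iff_ne_empty.mpr h
      have hif : i ∈ E.faulty :=
        homit i ⟨j, hj, Or.inr (Set.nonempty_iff_ne_empty.mp ⟨m, hm⟩)⟩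
      have hri : m.receiver = i := ((hwf i j hj).2.2.2.1 m (Or.inr hm)).1
      exact hF i hif (by rintro rfl; exact hmy hri)

/-- If `A` solves weak consensus with message complexity
`< t²/32`, `(X, Y, Z)` partitions `Π` with `|Y| = t/4` and `|Z| ≤ t/4`, and
`E` is an infinite execution with faulty set `Y ∪ Z` in which all processes of
`X` decide the bit `bX` and group `Y` is isolated from some round `k`, then
more than half of the processes of `Y` decide `bX` in `E`. -/
theorem isolated_majority_decides
    (n t : ℕ) (ht8 : 8 ≤ t) (htn : t < n) (hdvd : 8 ∣ t)
    (A : Algorithm n Bool Bool) (hA : SolvesWeakConsensus t A)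
    (hcomp : MsgComplexity t A < ((t ^ 2 / 32 : ℕ) : ℕ∞))
    (X Y Z : Set (Fin n))
    (hunion : X ∪ Y ∪ Z = Set.univ)
    (hXY : Disjoint X Y) (hXZ : Disjoint X Z) (hYZ : Disjoint Y Z)
    (hY : Y.ncard = t / 4) (hZ : Z.ncard ≤ t / 4)
    (E : Exec A) (hE : IsExec t A ⊤ E)
    (hfaulty : E.faulty = Y ∪ Z)
    (bX : Bool) (hdec : ∀ x ∈ X, Decides ⊤ E x bX)
    (k : ℕ) (hiso : IsolatedFrom t E Y k) :
    ∃ Y' ⊆ Y, Y.ncard < 2 * Y'.ncard ∧ ∀ y ∈ Y', Decides ⊤ E y bX := by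
  classical
  obtain ⟨s, rfl⟩ := hdvd
  have hs1 : 1 ≤ s := by omega
  have ht4 : 8 * s / 4 = 2 * s := by omega
  have ht32 : (8 * s) ^ 2 / 32 = 2 * s ^ 2 := by
    have h : (8 * s) ^ 2 = 32 * (2 * s ^ 2) := by ring
    omega
  rw [ht4] at hY hZ
  have hwf := hE.2.2.2.1
  have hrecvv := hE.2.2.2.2.2.1
  have hencard : ∀ S : Set (Fin n), S.encard = (S.ncard : ℕ∞) := by
    intro S
    rw [Set.encard_eq_coe_toFinset_card, Set.ncard_eq_toFinset_card']
  -- the set of messages sent by correct processes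
  set W : Set (Message n) := {m | ∃ i, i ∉ E.faulty ∧ ∃ j, 1 ≤ j ∧ m ∈ E.sent i j} with hWdef
  have hWenc : W.encard < ((2 * s ^ 2 : ℕ) : ℕ∞) := by
    have h1 : msgCount E ≤ MsgComplexity (8 * s) A :=
      le_iSup (fun E : {E : Exec A // IsExec (8 * s) A ⊤ E} => msgCount E.1) ⟨E, hE⟩
    calc W.encard = msgCount E := rfl
    _ ≤ MsgComplexity (8 * s) A := h1
    _ < _ := by rw [← ht32]; exact hcomp
  have hWfin : W.Finite := by
    rw [← Set.encard_lt_top_iff]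
    exact lt_of_lt_of_le hWenc le_top
  have hWcard : W.ncard < 2 * s ^ 2 := by
    have h := hWenc
    rw [Set.Finite.encard_eq_coe_toFinset_card hWfin, Nat.cast_lt,
      ← Set.ncard_eq_toFinset_card _ hWfin] at h
    exact h
  -- messages from X receive-omitted by y
  set M : Fin n → Set (Message n) :=
    fun y => {m | m.sender ∈ X ∧ 1 ≤ m.round ∧ m ∈ E.recvOmit y m.round} with hMdef
  have hXf : ∀ x ∈ X, x ∉ E.faulty := by
    intro x hx hf
    rw [hfaulty] at hf
    rcases hf with h | h
    · exact Set.disjoint_left.mp hXY hx h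
    · exact Set.disjoint_left.mp hXZ hx h
  have hMW : ∀ y, M y ⊆ W := by
    intro y m hm
    obtain ⟨hx, hr, ho⟩ := hm
    have hsent : m ∈ E.sent m.sender m.round :=
      hrecvv y m.round ⟨hr, le_top⟩ m (Or.inr ho)
    exact ⟨m.sender, hXf _ hx, m.round, hr, hsent⟩
  have hMfin : ∀ y, (M y).Finite := fun y => hWfin.subset (hMW y)
  have hMrec : ∀ y, ∀ m ∈ M y, m.receiver = y := by
    intro y m hm
    exact ((hwf y m.round ⟨hm.2.1, le_top⟩).2.2.2.1 m (Or.inr hm.2.2)).1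
  -- key step : every y ∈ Y with few cut messages decides bX
  have hKey : ∀ y ∈ Y, (M y).ncard ≤ 4 * s → Decides ⊤ E y bX := by
    intro y hy hMy
    obtain ⟨-, -, hisoY⟩ := hiso
    obtain ⟨hyF, hySend, hyRecv⟩ := hisoY y hy
    set I : Set (Fin n) := Message.sender '' M y with hIdef
    have hIcard : I.ncard ≤ 4 * s := le_trans (Set.ncard_image_le (hMfin y)) hMy
    have hIX : I ⊆ X := by rintro _ ⟨m, hm, rfl⟩; exact hm.1
    set F' : Set (Fin n) := (E.faulty \ {y}) ∪ I with hF'def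
    have hfc : E.faulty.ncard ≤ 4 * s := by
      rw [hfaulty]
      have h := Set.ncard_union_le Y Z
      omega
    have hdiffc : (E.faulty \ {y}).ncard ≤ 4 * s - 1 := by
      rw [Set.ncard_diff_singleton_of_mem hyF]
      have hpos : 0 < E.faulty.ncard := by
        rw [Set.ncard_pos]
        exact ⟨y, hyF⟩
      omega
    have hF'card : F'.ncard ≤ 8 * s - 1 := by
      have h : F'.ncard ≤ (E.faulty \ {y}).ncard + I.ncard := by
        rw [hF'def]
        exact Set.ncard_union_le _ _
      omega
    have hF'enc : F'.encard ≤ ((8 * s : ℕ) : ℕ∞) := by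
      rw [hencard F', Nat.cast_le]
      omega
    have hSend : ∀ i j, 1 ≤ j → (E.sent i j ∩ E.recvOmit y j).Nonempty → i ∈ F' := by
      rintro i j hj ⟨m, hms, hmo⟩
      have hsr : m.sender = i ∧ m.round = j := (hwf i j ⟨hj, le_top⟩).2.2.1 m (Or.inl hms)
      have hmo' := hmo
      rw [hyRecv j hj] at hmo'
      obtain ⟨hrecv, hsY, hkj, hsent⟩ := hmo'
      have hiY : i ∉ Y := hsr.1 ▸ hsY
      have hiXZ : i ∈ (X ∪ Y) ∪ Z := hunion ▸ Set.mem_univ i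
      rcases hiXZ with (hiX | hiY') | hiZ
      · refine Or.inr ⟨m, ⟨hsr.1 ▸ hiX, ?_, ?_⟩, hsr.1⟩
        · rw [hsr.2]; exact hj
        · rw [hsr.2]; exact hmo
      · exact (hiY hiY').elim
      · refine Or.inl ⟨by rw [hfaulty]; exact Or.inr hiZ, ?_⟩
        simp only [Set.mem_singleton_iff]
        rintro rfl
        exact Set.disjoint_left.mp hYZ hy hiZ
    have hF : ∀ i, i ∈ E.faulty → i ≠ y → i ∈ F' := by
      intro i hi hne
      exact Or.inl ⟨hi, by simpa using hne⟩
    have hE' := cutExec_isExec hE y F' hF'enc hySend hF hSend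
    have hyF' : y ∉ F' := by
      rintro (⟨-, h⟩ | h)
      · exact h rfl
      · exact Set.disjoint_left.mp hXY (hIX h) hy
    -- a correct process of X outside F'
    have hXcard : 4 * s < X.ncard := by
      have hdisjX : Disjoint X (Y ∪ Z) := Set.disjoint_union_right.mpr ⟨hXY, hXZ⟩
      have huni : X ∪ (Y ∪ Z) = Set.univ := by rw [← Set.union_assoc]; exact hunion
      have hcardsum : X.ncard + (Y ∪ Z).ncard = n := by
        rw [← Set.ncard_union_eq hdisjX, huni, Set.ncard_univ, Nat.card_eq_fintype_card,
          Fintype.card_fin]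
      have h := Set.ncard_union_le Y Z
      omega
    have hxex : ∃ x ∈ X, x ∉ I := by
      by_contra h
      push_neg at h
      have := Set.ncard_le_ncard h (Set.toFinite I)
      omega
    obtain ⟨x, hxX, hxI⟩ := hxex
    have hxF' : x ∉ F' := by
      rintro (⟨hxf, -⟩ | hxI')
      · exact hXf x hxX hxf
      · exact hxI hxI'
    obtain ⟨hterm, hagree, -⟩ := hA (cutExec E y F') hE'
    obtain ⟨b, hb⟩ := hterm y hyF'
    have hxdec : Decides ⊤ (cutExec E y F') x bX := hdec x hxX
    have hbb : b = bX := hagree y x b bX hyF' hxF' hb hxdec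
    rw [hbb] at hb
    exact hb
  -- counting : few y ∈ Y have many cut messages
  set bad : Set (Fin n) := {y ∈ Y | 4 * s < (M y).ncard} with hbaddef
  have hbadY : bad ⊆ Y := fun y hy => hy.1
  have hbadcard : bad.ncard < s := by
    by_contra hge
    push_neg at hge
    set WF : Finset (Message n) := hWfin.toFinset with hWF
    set MF : Fin n → Finset (Message n) := fun y => (hMfin y).toFinset with hMF
    have hMFW : ∀ y, MF y ⊆ WF := fun y => Set.Finite.toFinset_subset_toFinset.mpr (hMW y)
    set badF : Finset (Fin n) := (Set.toFinite bad).toFinset with hbadF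
    have hdisj : ∀ y ∈ badF, ∀ y' ∈ badF, y ≠ y' → Disjoint (MF y) (MF y') := by
      intro y _ y' _ hne
      rw [Finset.disjoint_left]
      intro m hm hm'
      rw [hMF, Set.Finite.mem_toFinset] at hm hm'
      exact hne ((hMrec y m hm).symm.trans (hMrec y' m hm'))
    have hcard1 : (badF.biUnion MF).card ≤ WF.card := by
      refine Finset.card_le_card ?_
      intro m hm
      obtain ⟨y, -, hm⟩ := Finset.mem_biUnion.mp hm
      exact hMFW y hm
    have hcard2 : badF.card * (4 * s + 1) ≤ (badF.biUnion MF).card := by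
      rw [Finset.card_biUnion hdisj]
      calc badF.card * (4 * s + 1) = ∑ _y ∈ badF, (4 * s + 1) := by
            rw [Finset.sum_const, smul_eq_mul]
      _ ≤ ∑ y ∈ badF, (MF y).card := by
          refine Finset.sum_le_sum ?_
          intro y hy
          have h1 : 4 * s < (M y).ncard := by
            rw [hbadF, Set.Finite.mem_toFinset] at hy
            exact hy.2
          rw [Set.ncard_eq_toFinset_card _ (hMfin y)] at h1
          have h2 : (MF y).card = (hMfin y).toFinset.card := rfl
          omega
    have hWFc : WF.card < 2 * s ^ 2 := by
      rw [hWF, ← Set.ncard_eq_toFinset_card _ hWfin]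
      exact hWcard
    have hbc : badF.card = bad.ncard := by
      rw [hbadF, ← Set.ncard_eq_toFinset_card _ (Set.toFinite bad)]
    nlinarith [hge, hcard1, hcard2, hWFc, hbc, hs1]
  refine ⟨Y \ bad, Set.diff_subset, ?_, ?_⟩
  · have hd := Set.ncard_diff hbadY (Set.toFinite bad)
    omega
  · intro y hy
    refine hKey y hy.1 ?_
    by_contra h
    push_neg at h
    exact hy.2 ⟨hy.1, h⟩
end

section
/- Let n, t ∈ ℕ with 8 ≤ t < n and t divisible by 8, let 𝒜 solve weak consensus in the omission model with message complexity strictly less than t²/32, and let (A, B, C) be a partition of Π with |B| = |C| = t/4. Let k₁, k₂ ∈ ℕ and b ∈ {0,1} be such that E_0^{B(k₁)} and E_b^{C(k₂)} are mergeable. If some process of A decides b₁ in E_0^{B(k₁)} and some process of A decides b₂ in E_b^{C(k₂)}, then b₁ = b₂. -/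
open Classical

section AuxBasic

variable {n t : ℕ} {Vi Vo : Type} {A : Algorithm n Vi Vo} {E : Exec A}

lemma ihTop {j : ℕ} (h : 1 ≤ j) : InHorizon ⊤ j := ⟨h, le_top⟩

lemma omit_empty_of_not_faulty (hE : IsExec t A ⊤ E) {i : Fin n} {j : ℕ}
    (hj : 1 ≤ j) (hi : i ∉ E.faulty) :
    E.sendOmit i j = ∅ ∧ E.recvOmit i j = ∅ := by
  have hom := hE.2.2.2.2.2.2
  constructor
  · by_contra h
    exact hi (hom i ⟨j, ihTop hj, Or.inl h⟩)
  · by_contra h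
    exact hi (hom i ⟨j, ihTop hj, Or.inr h⟩)

lemma recvd_union_eq (hE : IsExec t A ⊤ E) {i : Fin n} {j : ℕ} (hj : 1 ≤ j) :
    E.recvd i j ∪ E.recvOmit i j = {m | m.receiver = i ∧ m ∈ E.sent m.sender j} := by
  ext m
  constructor
  · intro hm
    refine ⟨((hE.2.2.2.1 i j (ihTop hj)).2.2.2.1 m hm).1, ?_⟩
    exact hE.2.2.2.2.2.1 i j (ihTop hj) m hm
  · rintro ⟨hrec, hsent⟩
    have := hE.2.2.2.2.1 m.sender j (ihTop hj) m hsent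
    rwa [hrec] at this

lemma recvd_eq_diff (hE : IsExec t A ⊤ E) {i : Fin n} {j : ℕ} (hj : 1 ≤ j) :
    E.recvd i j = {m | m.receiver = i ∧ m ∈ E.sent m.sender j} \ E.recvOmit i j := by
  have hu := recvd_union_eq hE (i := i) hj
  have hd := (hE.2.2.2.1 i j (ihTop hj)).2.2.2.2.2.1
  ext m
  constructor
  · intro hm
    refine ⟨hu ▸ Or.inl hm, fun hm' => ?_⟩
    have : m ∈ E.recvd i j ∩ E.recvOmit i j := ⟨hm, hm'⟩
    simp [hd] at this
  · rintro ⟨hm, hm'⟩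
    rcases (hu ▸ hm : m ∈ E.recvd i j ∪ E.recvOmit i j) with h | h
    · exact h
    · exact absurd h hm'

lemma init_facts (hE : IsExec t A ⊤ E) (i : Fin n) :
    E.st i 1 = A.init i (A.prop (E.st i 1)) ∧
    E.sent i 1 ∪ E.sendOmit i 1 = A.initMsgs i (A.prop (E.st i 1)) := by
  obtain ⟨v, hst, hsent⟩ := hE.2.1 le_top i
  have hv : A.prop (E.st i 1) = v := by rw [hst, A.init_prop]
  rw [hv]
  exact ⟨hst, hsent⟩

lemma step_facts (hE : IsExec t A ⊤ E) {i : Fin n} {j : ℕ} (hj : 1 ≤ j) :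
    E.st i (j + 1) = (A.trans (E.st i j) (E.recvd i j)).1 ∧
    E.sent i (j + 1) ∪ E.sendOmit i (j + 1) = (A.trans (E.st i j) (E.recvd i j)).2 := by
  have h := hE.2.2.1 i j hj le_top
  exact ⟨by rw [h], by rw [h]⟩

lemma validRecv_of_exec (hE : IsExec t A ⊤ E) {i : Fin n} {j : ℕ} (hj : 1 ≤ j) :
    ValidRecv A.proc A.rnd (E.st i j) (E.recvd i j) := by
  have hwf := hE.2.2.2.1 i j (ihTop hj)
  constructor
  · intro m hm
    have := hwf.2.2.2.1 m (Or.inl hm)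
    rw [hwf.1, hwf.2.1]
    exact this
  · intro m hm m' hm' hs
    exact hwf.2.2.2.2.2.2.2 m (Or.inl hm) m' (Or.inl hm') hs

end AuxBasic

section AuxIso

variable {n t : ℕ} {Vi Vo : Type} {A : Algorithm n Vi Vo} {E : Exec A}
  {G : Set (Fin n)} {k : ℕ}

lemma iso_sendOmit (hE : IsExec t A ⊤ E) (hf : E.faulty = G)
    (hiso : IsolatedFrom t E G k) {i : Fin n} {j : ℕ} (hj : 1 ≤ j) :
    E.sendOmit i j = ∅ := by
  by_cases hi : i ∈ G
  · exact (hiso.2.2 i hi).2.1 j hj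
  · exact (omit_empty_of_not_faulty hE hj (hf ▸ hi)).1

lemma iso_recvd (hE : IsExec t A ⊤ E) (hf : E.faulty = G)
    (hiso : IsolatedFrom t E G k) {i : Fin n} {j : ℕ} (hj : 1 ≤ j) :
    E.recvd i j = {m | m ∈ E.sent m.sender j ∧ m.receiver = i ∧
      ¬ (i ∈ G ∧ m.sender ∉ G ∧ k ≤ j)} := by
  rw [recvd_eq_diff hE hj]
  by_cases hi : i ∈ G
  · rw [(hiso.2.2 i hi).2.2 j hj]
    ext m
    simp only [Set.mem_diff, Set.mem_setOf_eq]
    tauto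
  · rw [(omit_empty_of_not_faulty hE hj (hf ▸ hi)).2]
    ext m
    simp only [Set.mem_diff, Set.mem_setOf_eq, Set.mem_empty_iff_false]
    tauto

lemma iso_sent_one (hE : IsExec t A ⊤ E) (hf : E.faulty = G)
    (hiso : IsolatedFrom t E G k) (i : Fin n) :
    E.sent i 1 = A.initMsgs i (A.prop (E.st i 1)) := by
  have h := (init_facts hE i).2
  rwa [iso_sendOmit hE hf hiso le_rfl, Set.union_empty] at h

lemma iso_sent_succ (hE : IsExec t A ⊤ E) (hf : E.faulty = G)
    (hiso : IsolatedFrom t E G k) {i : Fin n} {j : ℕ} (hj : 1 ≤ j) :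
    E.sent i (j + 1) = (A.trans (E.st i j) (E.recvd i j)).2 := by
  have h := (step_facts hE (i := i) hj).2
  rwa [iso_sendOmit hE hf hiso (by omega), Set.union_empty] at h

end AuxIso
section Merge

variable {n t : ℕ}

/-- Proposal of each process in the merged execution. -/
noncomputable def mProp (C : Set (Fin n)) (b : Bool) (i : Fin n) : Bool :=
  if i ∈ C then b else false

/-- The receive-omission rule in the merged execution. -/
def mOmit (B C : Set (Fin n)) (k₁ k₂ : ℕ) (i : Fin n) (j : ℕ) (m : Message n) : Prop :=
  (i ∈ B ∧ m.sender ∉ B ∧ k₁ ≤ j) ∨ (i ∈ C ∧ m.sender ∉ C ∧ k₂ ≤ j)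

variable (A : Algorithm n Bool Bool) (B C : Set (Fin n)) (k₁ k₂ : ℕ) (b : Bool)

/-- States and sent-message sets of the merged execution, by round. -/
noncomputable def mS : ℕ → Fin n → A.St × Set (Message n)
  | 0 => fun i => (A.init i (mProp C b i), A.initMsgs i (mProp C b i))
  | 1 => fun i => (A.init i (mProp C b i), A.initMsgs i (mProp C b i))
  | (j + 2) => fun i =>
      A.trans (mS (j + 1) i).1
        {m | m ∈ (mS (j + 1) m.sender).2 ∧ m.receiver = i ∧ ¬ mOmit B C k₁ k₂ i (j + 1) m}

/-- Received messages in the merged execution. -/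
def mRecv (j : ℕ) (i : Fin n) : Set (Message n) :=
  {m | m ∈ (mS A B C k₁ k₂ b j m.sender).2 ∧ m.receiver = i ∧ ¬ mOmit B C k₁ k₂ i j m}

lemma mS_succ {j : ℕ} (hj : 1 ≤ j) (i : Fin n) :
    mS A B C k₁ k₂ b (j + 1) i
      = A.trans (mS A B C k₁ k₂ b j i).1 (mRecv A B C k₁ k₂ b j i) := by
  obtain ⟨j', rfl⟩ : ∃ j', j = j' + 1 := ⟨j - 1, by omega⟩
  rfl

/-- The merged execution. -/
noncomputable def mExec : Exec A where
  faulty := B ∪ C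
  st := fun i j => (mS A B C k₁ k₂ b j i).1
  sent := fun i j => (mS A B C k₁ k₂ b j i).2
  sendOmit := fun _ _ => ∅
  recvd := fun i j => mRecv A B C k₁ k₂ b j i
  recvOmit := fun i j =>
    {m | m ∈ (mS A B C k₁ k₂ b j m.sender).2 ∧ m.receiver = i ∧ mOmit B C k₁ k₂ i j m}

lemma mS_wf : ∀ j, 1 ≤ j → ∀ i : Fin n,
    A.proc (mS A B C k₁ k₂ b j i).1 = i ∧
    A.rnd (mS A B C k₁ k₂ b j i).1 = j ∧
    (∀ m ∈ (mS A B C k₁ k₂ b j i).2, m.sender = i ∧ m.round = j) ∧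
    (∀ m ∈ (mS A B C k₁ k₂ b j i).2, ∀ m' ∈ (mS A B C k₁ k₂ b j i).2,
      m.receiver = m'.receiver → m = m') := by
  intro j
  induction j with
  | zero => omega
  | succ j ih =>
    intro _ i
    rcases Nat.eq_or_lt_of_le (Nat.one_le_iff_ne_zero.mpr (Nat.succ_ne_zero j)) with h1 | h1
    · -- j + 1 = 1
      have hj0 : j = 0 := by omega
      subst hj0
      exact ⟨A.init_proc _ _, A.init_rnd _ _,
        fun m hm => ⟨A.initMsgs_sender _ _ m hm, A.initMsgs_round _ _ m hm⟩,
        fun m hm m' hm' => A.initMsgs_uniq _ _ m hm m' hm'⟩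
    · have hj : 1 ≤ j := by omega
      have IH := ih hj
      have hvalid : ValidRecv A.proc A.rnd (mS A B C k₁ k₂ b j i).1
          (mRecv A B C k₁ k₂ b j i) := by
        constructor
        · intro m hm
          refine ⟨hm.2.1.trans (IH i).1.symm, ?_⟩
          rw [(IH i).2.1]
          exact ((IH m.sender).2.2.1 m hm.1).2
        · intro m hm m' hm' hs
          have h1 := hm.1
          have h2 := hm'.1
          rw [hs] at h1
          exact (IH m'.sender).2.2.2 m h1 m' h2 (hm.2.1.trans hm'.2.1.symm)
      have htr := A.trans_ok _ _ hvalid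
      rw [mS_succ A B C k₁ k₂ b hj i]
      refine ⟨htr.1.trans (IH i).1, ?_, ?_, htr.2.2.2.2.2⟩
      · rw [htr.2.1, (IH i).2.1]
      · intro m hm
        have := htr.2.2.2.2.1 m hm
        rw [(IH i).1, (IH i).2.1] at this
        exact this

@[simp] lemma mExec_faulty : (mExec A B C k₁ k₂ b).faulty = B ∪ C := rfl
@[simp] lemma mExec_st (i : Fin n) (j : ℕ) :
    (mExec A B C k₁ k₂ b).st i j = (mS A B C k₁ k₂ b j i).1 := rfl
@[simp] lemma mExec_sent (i : Fin n) (j : ℕ) :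
    (mExec A B C k₁ k₂ b).sent i j = (mS A B C k₁ k₂ b j i).2 := rfl
@[simp] lemma mExec_sendOmit (i : Fin n) (j : ℕ) :
    (mExec A B C k₁ k₂ b).sendOmit i j = ∅ := rfl
@[simp] lemma mExec_recvd (i : Fin n) (j : ℕ) :
    (mExec A B C k₁ k₂ b).recvd i j = mRecv A B C k₁ k₂ b j i := rfl
@[simp] lemma mExec_recvOmit (i : Fin n) (j : ℕ) :
    (mExec A B C k₁ k₂ b).recvOmit i j
      = {m | m ∈ (mS A B C k₁ k₂ b j m.sender).2 ∧ m.receiver = i ∧ mOmit B C k₁ k₂ i j m} :=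
  rfl

lemma mExec_isExec (hcard : (B ∪ C).encard ≤ (t : ℕ∞)) :
    IsExec t A ⊤ (mExec A B C k₁ k₂ b) := by
  have hwf := mS_wf A B C k₁ k₂ b
  refine ⟨hcard, ?_, ?_, ?_, ?_, ?_, ?_⟩
  · -- init
    intro _ i
    refine ⟨mProp C b i, rfl, ?_⟩
    simp only [mExec_sent, mExec_sendOmit, Set.union_empty]
    rfl
  · -- trans
    intro i j hj _
    simp only [mExec_st, mExec_sent, mExec_sendOmit, mExec_recvd, Set.union_empty]
    rw [mS_succ A B C k₁ k₂ b hj i]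
  · -- wf
    intro i j hj
    have hj1 : 1 ≤ j := hj.1
    simp only [mExec_st, mExec_sent, mExec_sendOmit, mExec_recvd, mExec_recvOmit,
      Set.union_empty, Set.inter_empty]
    refine ⟨(hwf j hj1 i).1, (hwf j hj1 i).2.1, ?_, ?_, by trivial, ?_, ?_, ?_⟩
    · intro m hm
      exact (hwf j hj1 i).2.2.1 m hm
    · intro m hm
      rcases hm with hm | hm
      · exact ⟨hm.2.1, ((hwf j hj1 m.sender).2.2.1 m hm.1).2⟩
      · exact ⟨hm.2.1, ((hwf j hj1 m.sender).2.2.1 m hm.1).2⟩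
    · ext m
      simp only [Set.mem_inter_iff, Set.mem_empty_iff_false, iff_false, not_and]
      intro h1 h2
      exact absurd h2.2.2 h1.2.2
    · intro m hm m' hm' h
      exact (hwf j hj1 i).2.2.2 m hm m' hm' h
    · intro m hm m' hm' h
      have h1 : m ∈ (mS A B C k₁ k₂ b j m.sender).2 ∧ m.receiver = i := by
        rcases hm with hm | hm
        · exact ⟨hm.1, hm.2.1⟩
        · exact ⟨hm.1, hm.2.1⟩
      have h2 : m' ∈ (mS A B C k₁ k₂ b j m'.sender).2 ∧ m'.receiver = i := by
        rcases hm' with hm' | hm'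
        · exact ⟨hm'.1, hm'.2.1⟩
        · exact ⟨hm'.1, hm'.2.1⟩
      rw [h] at h1
      exact (hwf j hj1 m'.sender).2.2.2 m h1.1 m' h2.1 (h1.2.trans h2.2.symm)
  · -- send-validity
    intro i j hj m hm
    simp only [mExec_sent] at hm
    simp only [mExec_recvd, mExec_recvOmit, mRecv, Set.mem_union, Set.mem_setOf_eq]
    have hs := ((hwf j hj.1 i).2.2.1 m hm).1
    by_cases ho : mOmit B C k₁ k₂ m.receiver j m
    · exact Or.inr ⟨by rwa [hs], by trivial, ho⟩
    · exact Or.inl ⟨by rwa [hs], by trivial, ho⟩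
  · -- receive-validity
    intro i j hj m hm
    simp only [mExec_recvd, mExec_recvOmit, mRecv, Set.mem_union, Set.mem_setOf_eq] at hm
    simp only [mExec_sent]
    rcases hm with hm | hm
    · exact hm.1
    · exact hm.1
  · -- omission-validity
    rintro i ⟨j, hj, h | h⟩
    · exact absurd rfl h
    · simp only [mExec_recvOmit] at h
      obtain ⟨m, hm⟩ := Set.nonempty_iff_ne_empty.mpr h
      simp only [Set.mem_setOf_eq] at hm
      simp only [mExec_faulty, Set.mem_union]
      rcases hm.2.2 with h | h
      · exact Or.inl h.1
      · exact Or.inr h.1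

end Merge
section Views

variable {n t : ℕ} {A : Algorithm n Bool Bool} {B C : Set (Fin n)} {k₁ k₂ : ℕ} {b : Bool}
  {E₁ E₂ : Exec A}

lemma prefix_agree
    (hmm : max k₁ k₂ ≤ min k₁ k₂ + 1) (hbm : 2 ≤ max k₁ k₂ → b = false)
    (hE₁ : IsExec t A ⊤ E₁) (hp₁ : ∀ i, Proposes E₁ i false)
    (hf₁ : E₁.faulty = B) (hiso₁ : IsolatedFrom t E₁ B k₁)
    (hE₂ : IsExec t A ⊤ E₂) (hp₂ : ∀ i, Proposes E₂ i b)
    (hf₂ : E₂.faulty = C) (hiso₂ : IsolatedFrom t E₂ C k₂) :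
    ∀ j, 1 ≤ j → j < max k₁ k₂ → ∀ i,
      E₁.st i j = E₂.st i j ∧ E₁.sent i j = E₂.sent i j := by
  intro j
  induction j with
  | zero => omega
  | succ j ih =>
    intro _ hlt i
    by_cases hj0 : j = 0
    · subst hj0
      have hb : b = false := hbm (by omega)
      have h1 : E₁.st i 1 = A.init i false := by
        have := (init_facts hE₁ i).1; rwa [hp₁ i] at this
      have h2 : E₂.st i 1 = A.init i false := by
        have := (init_facts hE₂ i).1; rwa [hp₂ i, hb] at this
      have h3 : E₁.sent i 1 = A.initMsgs i false := by
        have := iso_sent_one hE₁ hf₁ hiso₁ i; rwa [hp₁ i] at this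
      have h4 : E₂.sent i 1 = A.initMsgs i false := by
        have := iso_sent_one hE₂ hf₂ hiso₂ i; rwa [hp₂ i, hb] at this
      exact ⟨h1.trans h2.symm, h3.trans h4.symm⟩
    · have hj : 1 ≤ j := by omega
      have hjlt : j < max k₁ k₂ := by omega
      have hjmin : j < min k₁ k₂ := by omega
      have hrecv : E₁.recvd i j = E₂.recvd i j := by
        rw [iso_recvd hE₁ hf₁ hiso₁ hj, iso_recvd hE₂ hf₂ hiso₂ hj]
        ext m
        simp only [Set.mem_setOf_eq]
        have hs := (ih hj hjlt m.sender).2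
        constructor
        · rintro ⟨hm1, hm2, -⟩
          exact ⟨hs ▸ hm1, hm2, fun hc => absurd hc.2.2 (by omega)⟩
        · rintro ⟨hm1, hm2, -⟩
          exact ⟨hs ▸ hm1, hm2, fun hc => absurd hc.2.2 (by omega)⟩
      have hst := (ih hj hjlt i).1
      constructor
      · rw [(step_facts hE₁ hj).1, (step_facts hE₂ hj).1, hst, hrecv]
      · rw [iso_sent_succ hE₁ hf₁ hiso₁ hj, iso_sent_succ hE₂ hf₂ hiso₂ hj, hst, hrecv]

end Views

section Views2

variable {n t : ℕ} {A : Algorithm n Bool Bool} {B C : Set (Fin n)} {k₁ k₂ : ℕ} {b : Bool}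
  {E₁ E₂ : Exec A}

lemma merge_views
    (hmm : max k₁ k₂ ≤ min k₁ k₂ + 1) (hbm : 2 ≤ max k₁ k₂ → b = false)
    (hBC : Disjoint B C)
    (hE₁ : IsExec t A ⊤ E₁) (hp₁ : ∀ i, Proposes E₁ i false)
    (hf₁ : E₁.faulty = B) (hiso₁ : IsolatedFrom t E₁ B k₁)
    (hE₂ : IsExec t A ⊤ E₂) (hp₂ : ∀ i, Proposes E₂ i b)
    (hf₂ : E₂.faulty = C) (hiso₂ : IsolatedFrom t E₂ C k₂) :
    ∀ j, 1 ≤ j → ∀ i,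
      (i ∈ B → (mS A B C k₁ k₂ b j i).1 = E₁.st i j ∧
        (mS A B C k₁ k₂ b j i).2 = E₁.sent i j) ∧
      (i ∈ C → (mS A B C k₁ k₂ b j i).1 = E₂.st i j ∧
        (mS A B C k₁ k₂ b j i).2 = E₂.sent i j) ∧
      (j < max k₁ k₂ → (mS A B C k₁ k₂ b j i).1 = E₁.st i j ∧
        (mS A B C k₁ k₂ b j i).2 = E₁.sent i j) := by
  have hpre := prefix_agree hmm hbm hE₁ hp₁ hf₁ hiso₁ hE₂ hp₂ hf₂ hiso₂
  intro j
  induction j with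
  | zero => omega
  | succ j ih =>
    intro _ i
    by_cases hj0 : j = 0
    · -- round 1
      subst hj0
      have hB1 : i ∈ B → (mS A B C k₁ k₂ b 1 i).1 = E₁.st i 1 ∧
          (mS A B C k₁ k₂ b 1 i).2 = E₁.sent i 1 := by
        intro hiB
        have hiC : i ∉ C := Set.disjoint_left.mp hBC hiB
        have hmp : mProp C b i = false := by simp [mProp, hiC]
        have h1 : E₁.st i 1 = A.init i false := by
          have := (init_facts hE₁ i).1; rwa [hp₁ i] at this
        have h3 : E₁.sent i 1 = A.initMsgs i false := by
          have := iso_sent_one hE₁ hf₁ hiso₁ i; rwa [hp₁ i] at this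
        exact ⟨by show A.init i (mProp C b i) = _; rw [hmp, h1],
          by show A.initMsgs i (mProp C b i) = _; rw [hmp, h3]⟩
      refine ⟨hB1, ?_, ?_⟩
      · intro hiC
        have hmp : mProp C b i = b := by simp [mProp, hiC]
        have h1 : E₂.st i 1 = A.init i b := by
          have := (init_facts hE₂ i).1; rwa [hp₂ i] at this
        have h3 : E₂.sent i 1 = A.initMsgs i b := by
          have := iso_sent_one hE₂ hf₂ hiso₂ i; rwa [hp₂ i] at this
        exact ⟨by show A.init i (mProp C b i) = _; rw [hmp, h1],
          by show A.initMsgs i (mProp C b i) = _; rw [hmp, h3]⟩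
      · intro hlt
        have hb : b = false := hbm (by omega)
        have hmp : mProp C b i = false := by simp [mProp, hb]
        have h1 : E₁.st i 1 = A.init i false := by
          have := (init_facts hE₁ i).1; rwa [hp₁ i] at this
        have h3 : E₁.sent i 1 = A.initMsgs i false := by
          have := iso_sent_one hE₁ hf₁ hiso₁ i; rwa [hp₁ i] at this
        exact ⟨by show A.init i (mProp C b i) = _; rw [hmp, h1],
          by show A.initMsgs i (mProp C b i) = _; rw [hmp, h3]⟩
    · -- step: j ≥ 1
      have hj : 1 ≤ j := by omega
      refine ⟨?_, ?_, ?_⟩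
      · -- i ∈ B
        intro hiB
        have hiC : i ∉ C := Set.disjoint_left.mp hBC hiB
        have hrecv : mRecv A B C k₁ k₂ b j i = E₁.recvd i j := by
          rw [iso_recvd hE₁ hf₁ hiso₁ hj]
          have hsent_eq : ∀ m : Message n, ¬ (m.sender ∉ B ∧ k₁ ≤ j) →
              (mS A B C k₁ k₂ b j m.sender).2 = E₁.sent m.sender j := by
            intro m hm
            by_cases hs : m.sender ∈ B
            · exact ((ih hj m.sender).1 hs).2
            · have hk : j < k₁ := by
                by_contra hk
                exact hm ⟨hs, by omega⟩
              exact ((ih hj m.sender).2.2 (lt_of_lt_of_le hk (le_max_left _ _))).2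
          ext m
          simp only [mRecv, Set.mem_setOf_eq]
          constructor
          · rintro ⟨h1, h2, h3⟩
            have h3' : ¬ (m.sender ∉ B ∧ k₁ ≤ j) := fun hc => h3 (Or.inl ⟨hiB, hc.1, hc.2⟩)
            exact ⟨(hsent_eq m h3') ▸ h1, h2, fun hc => h3' ⟨hc.2.1, hc.2.2⟩⟩
          · rintro ⟨h1, h2, h3⟩
            have h3' : ¬ (m.sender ∉ B ∧ k₁ ≤ j) := fun hc => h3 ⟨hiB, hc.1, hc.2⟩
            refine ⟨(hsent_eq m h3') ▸ h1, h2, ?_⟩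
            rintro (⟨-, hc1, hc2⟩ | ⟨hc, -⟩)
            · exact h3' ⟨hc1, hc2⟩
            · exact hiC hc
        have hst := ((ih hj i).1 hiB).1
        rw [mS_succ A B C k₁ k₂ b hj i]
        constructor
        · rw [(step_facts hE₁ hj).1, hst, hrecv]
        · rw [iso_sent_succ hE₁ hf₁ hiso₁ hj, hst, hrecv]
      · -- i ∈ C
        intro hiC
        have hiB : i ∉ B := Set.disjoint_right.mp hBC hiC
        have hrecv : mRecv A B C k₁ k₂ b j i = E₂.recvd i j := by
          rw [iso_recvd hE₂ hf₂ hiso₂ hj]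
          have hsent_eq : ∀ m : Message n, ¬ (m.sender ∉ C ∧ k₂ ≤ j) →
              (mS A B C k₁ k₂ b j m.sender).2 = E₂.sent m.sender j := by
            intro m hm
            by_cases hs : m.sender ∈ C
            · exact ((ih hj m.sender).2.1 hs).2
            · have hk : j < k₂ := by
                by_contra hk
                exact hm ⟨hs, by omega⟩
              have hlt : j < max k₁ k₂ := lt_of_lt_of_le hk (le_max_right _ _)
              rw [((ih hj m.sender).2.2 hlt).2]
              exact (hpre j hj hlt m.sender).2
          ext m
          simp only [mRecv, Set.mem_setOf_eq]
          constructor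
          · rintro ⟨h1, h2, h3⟩
            have h3' : ¬ (m.sender ∉ C ∧ k₂ ≤ j) := fun hc => h3 (Or.inr ⟨hiC, hc.1, hc.2⟩)
            exact ⟨(hsent_eq m h3') ▸ h1, h2, fun hc => h3' ⟨hc.2.1, hc.2.2⟩⟩
          · rintro ⟨h1, h2, h3⟩
            have h3' : ¬ (m.sender ∉ C ∧ k₂ ≤ j) := fun hc => h3 ⟨hiC, hc.1, hc.2⟩
            refine ⟨(hsent_eq m h3') ▸ h1, h2, ?_⟩
            rintro (⟨hc, -⟩ | ⟨-, hc1, hc2⟩)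
            · exact hiB hc
            · exact h3' ⟨hc1, hc2⟩
        have hst := ((ih hj i).2.1 hiC).1
        rw [mS_succ A B C k₁ k₂ b hj i]
        constructor
        · rw [(step_facts hE₂ hj).1, hst, hrecv]
        · rw [iso_sent_succ hE₂ hf₂ hiso₂ hj, hst, hrecv]
      · -- j + 1 < max
        intro hlt
        have hjmin : j < min k₁ k₂ := by omega
        have hjmax : j < max k₁ k₂ := by omega
        have hrecv : mRecv A B C k₁ k₂ b j i = E₁.recvd i j := by
          rw [iso_recvd hE₁ hf₁ hiso₁ hj]
          ext m
          simp only [mRecv, Set.mem_setOf_eq]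
          have hs := ((ih hj m.sender).2.2 hjmax).2
          constructor
          · rintro ⟨h1, h2, -⟩
            exact ⟨hs ▸ h1, h2, fun hc => absurd hc.2.2 (by omega)⟩
          · rintro ⟨h1, h2, -⟩
            refine ⟨hs ▸ h1, h2, ?_⟩
            rintro (⟨-, -, hc⟩ | ⟨-, -, hc⟩) <;> omega
        have hst := ((ih hj i).2.2 hjmax).1
        rw [mS_succ A B C k₁ k₂ b hj i]
        constructor
        · rw [(step_facts hE₁ hj).1, hst, hrecv]
        · rw [iso_sent_succ hE₁ hf₁ hiso₁ hj, hst, hrecv]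

end Views2
section Deiso

variable {n t : ℕ} {Vi Vo : Type} {A : Algorithm n Vi Vo}

/-- Reattribute process `p`'s receive-omissions as send-omissions of the
senders, making `p` correct. -/
lemma deisolate (E : Exec A) (hE : IsExec t A ⊤ E) (p : Fin n) (F' : Set (Fin n))
    (hcard : F'.encard ≤ (t : ℕ∞))
    (hsendO : ∀ i j, 1 ≤ j → E.sendOmit i j = ∅)
    (hfsub : ∀ i ∈ E.faulty, i ≠ p → i ∈ F')
    (hblame : ∀ j, 1 ≤ j → ∀ m ∈ E.recvOmit p j, m.sender ∈ F') :
    ∃ E' : Exec A, IsExec t A ⊤ E' ∧ E'.faulty = F' ∧ E'.st = E.st := by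
  classical
  refine ⟨{ faulty := F', st := E.st,
            sent := fun i j => E.sent i j \ E.recvOmit p j,
            sendOmit := fun i j => E.sendOmit i j ∪ (E.sent i j ∩ E.recvOmit p j),
            recvd := E.recvd,
            recvOmit := fun i j => if i = p then ∅ else E.recvOmit i j }, ?_, rfl, rfl⟩
  have hsso : ∀ i j, (E.sent i j \ E.recvOmit p j) ∪
      (E.sendOmit i j ∪ (E.sent i j ∩ E.recvOmit p j)) = E.sent i j ∪ E.sendOmit i j := by
    intro i j; ext m
    simp only [Set.mem_union, Set.mem_diff, Set.mem_inter_iff]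
    tauto
  have hrsub : ∀ i j, (if i = p then (∅ : Set (Message n)) else E.recvOmit i j)
      ⊆ E.recvOmit i j := by
    intro i j
    split <;> simp [Set.empty_subset, Set.Subset.rfl]
  obtain ⟨hc, hinit, htrans, hwf, hsv, hrv, hov⟩ := hE
  refine ⟨hcard, ?_, ?_, ?_, ?_, ?_, ?_⟩
  · -- init
    intro hk i
    obtain ⟨v, h1, h2⟩ := hinit hk i
    exact ⟨v, h1, by rw [hsso]; exact h2⟩
  · -- trans
    intro i j hj hk
    have h := htrans i j hj hk
    simp only [hsso]
    exact h
  · -- wf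
    intro i j hj
    obtain ⟨w1, w2, w3, w4, w5, w6, w7, w8⟩ := hwf i j hj
    refine ⟨w1, w2, ?_, ?_, ?_, ?_, ?_, ?_⟩
    · intro m hm; exact w3 m (by rw [← hsso i j]; exact hm)
    · intro m hm
      refine w4 m ?_
      rcases hm with hm | hm
      · exact Or.inl hm
      · exact Or.inr (hrsub i j hm)
    · ext m
      simp only [Set.mem_inter_iff, Set.mem_diff, Set.mem_union, Set.mem_empty_iff_false,
        iff_false, not_and]
      rintro ⟨hm1, hm2⟩ (h | h)
      · have : m ∈ E.sent i j ∩ E.sendOmit i j := ⟨hm1, h⟩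
        simp [w5] at this
      · exact hm2 h.2
    · ext m
      simp only [Set.mem_inter_iff, Set.mem_empty_iff_false, iff_false, not_and]
      intro hm1 hm2
      have : m ∈ E.recvd i j ∩ E.recvOmit i j := ⟨hm1, hrsub i j hm2⟩
      simp [w6] at this
    · intro m hm m' hm' h
      exact w7 m (by rw [← hsso i j]; exact hm) m' (by rw [← hsso i j]; exact hm') h
    · intro m hm m' hm' h
      refine w8 m ?_ m' ?_ h
      · rcases hm with hm | hm
        · exact Or.inl hm
        · exact Or.inr (hrsub i j hm)
      · rcases hm' with hm' | hm'
        · exact Or.inl hm'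
        · exact Or.inr (hrsub i j hm')
  · -- send-validity
    intro i j hj m hm
    have hm' := hsv i j hj m hm.1
    rcases hm' with h | h
    · exact Or.inl h
    · right
      by_cases hrp : m.receiver = p
      · exfalso
        exact hm.2 (hrp ▸ h)
      · simp only [if_neg hrp]
        exact h
  · -- receive-validity
    intro i j hj m hm
    have hmo : m ∈ E.recvd i j ∪ E.recvOmit i j := by
      rcases hm with h | h
      · exact Or.inl h
      · exact Or.inr (hrsub i j h)
    refine ⟨hrv i j hj m hmo, ?_⟩
    intro hmp
    have hrecp : m.receiver = p := ((hwf p j hj).2.2.2.1 m (Or.inr hmp)).1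
    have hreci : m.receiver = i := ((hwf i j hj).2.2.2.1 m hmo).1
    have hip : i = p := by rw [← hreci, hrecp]
    subst hip
    rcases hm with h | h
    · have : m ∈ E.recvd i j ∩ E.recvOmit i j := ⟨h, hmp⟩
      simp [(hwf i j hj).2.2.2.2.2.1] at this
    · simp at h
  · -- omission-validity
    rintro i ⟨j, hj, h | h⟩
    all_goals show i ∈ F'
    · replace h : E.sendOmit i j ∪ (E.sent i j ∩ E.recvOmit p j) ≠ ∅ := h
      rw [hsendO i j hj.1, Set.empty_union] at h
      obtain ⟨m, hm⟩ := Set.nonempty_iff_ne_empty.mpr h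
      have hsm : m.sender = i := ((hwf i j hj).2.2.1 m (Or.inl hm.1)).1
      have := hblame j hj.1 m hm.2
      rwa [hsm] at this
    · replace h : (if i = p then (∅ : Set (Message n)) else E.recvOmit i j) ≠ ∅ := h
      by_cases hip : i = p
      · simp [hip] at h
      · simp only [if_neg hip] at h
        exact hfsub i (hov i ⟨j, hj, Or.inr h⟩) hip

end Deiso
section Pigeon

open Classical in
lemma pigeonhole_receiver {n : ℕ} (s : ℕ) (G : Finset (Fin n)) (hG : G.card = 2 * s)
    (Φ Φ' : Finset (Message n)) (hΦ : Φ.card < 2 * s * s) (hΦ' : Φ'.card < 2 * s * s) :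
    ∃ p ∈ G, (Φ.filter (fun m => m.receiver = p)).card
      + (Φ'.filter (fun m => m.receiver = p)).card < 2 * s := by
  by_contra hcon
  push_neg at hcon
  have key : ∀ Ψ : Finset (Message n),
      ∑ p ∈ G, (Ψ.filter (fun m => m.receiver = p)).card ≤ Ψ.card := by
    intro Ψ
    rw [← Finset.card_biUnion]
    · refine Finset.card_le_card (fun m hm => ?_)
      obtain ⟨p, _, hm⟩ := Finset.mem_biUnion.mp hm
      exact (Finset.mem_filter.mp hm).1
    · intro x _ y _ hxy
      simp only [Finset.disjoint_left, Finset.mem_filter]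
      rintro m ⟨-, h1⟩ ⟨-, h2⟩
      exact hxy (by rw [← h1, h2])
  have hsum : 2 * s * (2 * s) ≤ Φ.card + Φ'.card := by
    calc 2 * s * (2 * s) = ∑ _p ∈ G, 2 * s := by
          rw [Finset.sum_const, hG, smul_eq_mul]
      _ ≤ ∑ p ∈ G, ((Φ.filter (fun m => m.receiver = p)).card
            + (Φ'.filter (fun m => m.receiver = p)).card) :=
          Finset.sum_le_sum (fun p hp => hcon p hp)
      _ = (∑ p ∈ G, (Φ.filter (fun m => m.receiver = p)).card)
            + ∑ p ∈ G, (Φ'.filter (fun m => m.receiver = p)).card :=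
          Finset.sum_add_distrib
      _ ≤ Φ.card + Φ'.card := add_le_add (key Φ) (key Φ')
  have hr : 2 * s * (2 * s) = 2 * s * s + 2 * s * s := by ring
  linarith

end Pigeon
section Final

variable {n t : ℕ} {Vi Vo : Type} {A : Algorithm n Vi Vo}

lemma decides_of_st_eq {E E' : Exec A} (h : E'.st = E.st) {i : Fin n} {v : Vo} :
    Decides ⊤ E i v → Decides ⊤ E' i v :=
  fun ⟨j, hj, hd⟩ => ⟨j, hj, by rw [h]; exact hd⟩

lemma exists_notMem_of_encard_lt {U : Set (Fin n)} (hU : U.encard < (n : ℕ∞)) :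
    ∃ x, x ∉ U := by
  rw [← Set.ne_univ_iff_exists_notMem]
  rintro rfl
  rw [Set.encard_univ, ENat.card_eq_coe_fintype_card, Fintype.card_fin] at hU
  exact lt_irrefl _ hU

end Final

/-- Let `A` solve weak consensus with message complexity
`< t²/32` and let `(Agrp, B, C)` partition `Π` with `|B| = |C| = t/4`.
If the executions `E₁ = E_0^{B(k₁)}` and `E₂ = E_b^{C(k₂)}` are mergeable,
some process of `Agrp` decides `b₁` in `E₁` and some process of `Agrp`
decides `b₂` in `E₂`, then `b₁ = b₂`. -/
theorem mergeable_executions_same_decision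
    (n t : ℕ) (ht8 : 8 ≤ t) (htn : t < n) (hdvd : 8 ∣ t)
    (A : Algorithm n Bool Bool) (hA : SolvesWeakConsensus t A)
    (hcomp : MsgComplexity t A < ((t ^ 2 / 32 : ℕ) : ℕ∞))
    (Agrp B C : Set (Fin n))
    (hunion : Agrp ∪ B ∪ C = Set.univ)
    (hAB : Disjoint Agrp B) (hAC : Disjoint Agrp C) (hBC : Disjoint B C)
    (hB : B.ncard = t / 4) (hC : C.ncard = t / 4)
    (k₁ k₂ : ℕ) (b : Bool)
    -- mergeability of `E_0^{B(k₁)}` and `E_b^{C(k₂)}`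
    (hmerge : (k₁ = 1 ∧ k₂ = 1) ∨ (k₁ ≤ k₂ + 1 ∧ k₂ ≤ k₁ + 1 ∧ b = false))
    -- `E₁` is the infinite execution `E_0^{B(k₁)}`
    (E₁ : Exec A) (hE₁ : IsExec t A ⊤ E₁) (hp₁ : ∀ i, Proposes E₁ i false)
    (hf₁ : E₁.faulty = B) (hiso₁ : IsolatedFrom t E₁ B k₁)
    -- `E₂` is the infinite execution `E_b^{C(k₂)}`
    (E₂ : Exec A) (hE₂ : IsExec t A ⊤ E₂) (hp₂ : ∀ i, Proposes E₂ i b)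
    (hf₂ : E₂.faulty = C) (hiso₂ : IsolatedFrom t E₂ C k₂)
    (a₁ : Fin n) (ha₁ : a₁ ∈ Agrp) (b₁ : Bool) (hd₁ : Decides ⊤ E₁ a₁ b₁)
    (a₂ : Fin n) (ha₂ : a₂ ∈ Agrp) (b₂ : Bool) (hd₂ : Decides ⊤ E₂ a₂ b₂) :
    b₁ = b₂ := by
  classical
  obtain ⟨s, hts⟩ := hdvd
  have hs1 : 1 ≤ s := by omega
  have hq4 : t / 4 = 2 * s := by omega
  have ht32 : t ^ 2 / 32 = 2 * s * s := by
    rw [hts]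
    have h : (8 * s) ^ 2 = 2 * s * s * 32 := by ring
    rw [h, Nat.mul_div_cancel _ (by norm_num : 0 < 32)]
  -- mergeability facts
  have hmm : max k₁ k₂ ≤ min k₁ k₂ + 1 := by
    rcases hmerge with ⟨h1, h2⟩ | ⟨h1, h2, -⟩ <;> omega
  have hbm : 2 ≤ max k₁ k₂ → b = false := by
    rcases hmerge with ⟨h1, h2⟩ | ⟨-, -, h3⟩
    · intro h; omega
    · exact fun _ => h3
  -- cardinalities
  have hBe : B.encard = ((2 * s : ℕ) : ℕ∞) := by
    rw [← B.toFinite.cast_ncard_eq, hB, hq4]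
  have hCe : C.encard = ((2 * s : ℕ) : ℕ∞) := by
    rw [← C.toFinite.cast_ncard_eq, hC, hq4]
  have hBCe : (B ∪ C).encard ≤ ((4 * s : ℕ) : ℕ∞) := by
    refine (Set.encard_union_le _ _).trans ?_
    rw [hBe, hCe, ← Nat.cast_add]
    exact Nat.cast_le.mpr (by omega)
  -- the merged execution
  set M := mExec A B C k₁ k₂ b with hMdef
  have hMexec : IsExec t A ⊤ M :=
    mExec_isExec A B C k₁ k₂ b (hBCe.trans (Nat.cast_le.mpr (by omega)))
  have hviews := merge_views hmm hbm hBC hE₁ hp₁ hf₁ hiso₁ hE₂ hp₂ hf₂ hiso₂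
  have hpre := prefix_agree hmm hbm hE₁ hp₁ hf₁ hiso₁ hE₂ hp₂ hf₂ hiso₂
  -- message sets
  have hMc : msgCount M < ((2 * s * s : ℕ) : ℕ∞) := by
    have h1 : msgCount M ≤ MsgComplexity t A := le_iSup_of_le ⟨M, hMexec⟩ le_rfl
    rw [← ht32]; exact lt_of_le_of_lt h1 hcomp
  have h1c : msgCount E₁ < ((2 * s * s : ℕ) : ℕ∞) := by
    have h1 : msgCount E₁ ≤ MsgComplexity t A := le_iSup_of_le ⟨E₁, hE₁⟩ le_rfl
    rw [← ht32]; exact lt_of_le_of_lt h1 hcomp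
  have h2c : msgCount E₂ < ((2 * s * s : ℕ) : ℕ∞) := by
    have h1 : msgCount E₂ ≤ MsgComplexity t A := le_iSup_of_le ⟨E₂, hE₂⟩ le_rfl
    rw [← ht32]; exact lt_of_le_of_lt h1 hcomp
  have hfinM : {m : Message n | ∃ i, i ∉ M.faulty ∧ ∃ j, 1 ≤ j ∧ m ∈ M.sent i j}.Finite :=
    Set.encard_lt_top_iff.mp (hMc.trans_le le_top)
  have hfin1 : {m : Message n | ∃ i, i ∉ E₁.faulty ∧ ∃ j, 1 ≤ j ∧ m ∈ E₁.sent i j}.Finite :=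
    Set.encard_lt_top_iff.mp (h1c.trans_le le_top)
  have hfin2 : {m : Message n | ∃ i, i ∉ E₂.faulty ∧ ∃ j, 1 ≤ j ∧ m ∈ E₂.sent i j}.Finite :=
    Set.encard_lt_top_iff.mp (h2c.trans_le le_top)
  set FM := hfinM.toFinset with hFMdef
  set F1 := hfin1.toFinset with hF1def
  set F2 := hfin2.toFinset with hF2def
  have hcardFM : FM.card < 2 * s * s := by
    have h := hMc
    unfold msgCount at h
    rw [hfinM.encard_eq_coe_toFinset_card] at h
    exact_mod_cast h
  have hcardF1 : F1.card < 2 * s * s := by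
    have h := h1c
    unfold msgCount at h
    rw [hfin1.encard_eq_coe_toFinset_card] at h
    exact_mod_cast h
  have hcardF2 : F2.card < 2 * s * s := by
    have h := h2c
    unfold msgCount at h
    rw [hfin2.encard_eq_coe_toFinset_card] at h
    exact_mod_cast h
  -- B and C as finsets
  have hBfc : B.toFinite.toFinset.card = 2 * s := by
    rw [← Set.ncard_eq_toFinset_card B B.toFinite, hB, hq4]
  have hCfc : C.toFinite.toFinset.card = 2 * s := by
    rw [← Set.ncard_eq_toFinset_card C C.toFinite, hC, hq4]
  -- ===== B side: find p ∈ B with few incoming messages =====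
  obtain ⟨p, hpBf, hpcard⟩ :=
    pigeonhole_receiver s B.toFinite.toFinset hBfc FM F1 hcardFM hcardF1
  have hpB : p ∈ B := B.toFinite.mem_toFinset.mp hpBf
  have hpC : p ∉ C := Set.disjoint_left.mp hBC hpB
  set SpM := (FM.filter (fun m => m.receiver = p)).image Message.sender with hSpMdef
  set Sp1 := (F1.filter (fun m => m.receiver = p)).image Message.sender with hSp1def
  have hSpMcard : SpM.card < 2 * s :=
    lt_of_le_of_lt Finset.card_image_le (by omega)
  have hSp1card : Sp1.card < 2 * s :=
    lt_of_le_of_lt Finset.card_image_le (by omega)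
  have hSpM_not : ∀ x ∈ SpM, x ∉ B ∪ C := by
    intro x hx
    obtain ⟨m, hm, rfl⟩ := Finset.mem_image.mp hx
    have hmF := (Finset.mem_filter.mp hm).1
    obtain ⟨i, hiF, j, hj, hms⟩ := hfinM.mem_toFinset.mp hmF
    have hsender : m.sender = i := ((mS_wf A B C k₁ k₂ b j hj i).2.2.1 m hms).1
    rw [hsender]
    simpa [hMdef, mExec_faulty] using hiF
  have hSp1_not : ∀ x ∈ Sp1, x ∉ B := by
    intro x hx
    obtain ⟨m, hm, rfl⟩ := Finset.mem_image.mp hx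
    have hmF := (Finset.mem_filter.mp hm).1
    obtain ⟨i, hiF, j, hj, hms⟩ := hfin1.mem_toFinset.mp hmF
    have hsender : m.sender = i := ((hE₁.2.2.2.1 i j (ihTop hj)).2.2.1 m (Or.inl hms)).1
    rw [hf₁] at hiF
    rw [hsender]
    exact hiF
  set F'M : Set (Fin n) := ((B ∪ C) \ {p}) ∪ ↑SpM with hF'Mdef
  have hcardF'M : F'M.encard ≤ (t : ℕ∞) := by
    refine (Set.encard_union_le _ _).trans ?_
    have h1 : ((B ∪ C) \ {p}).encard ≤ ((4 * s : ℕ) : ℕ∞) :=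
      (Set.encard_le_encard Set.diff_subset).trans hBCe
    have h2 : (↑SpM : Set (Fin n)).encard ≤ ((2 * s : ℕ) : ℕ∞) := by
      rw [Set.encard_coe_eq_coe_finsetCard]
      exact Nat.cast_le.mpr hSpMcard.le
    refine (add_le_add h1 h2).trans ?_
    rw [← Nat.cast_add]
    exact Nat.cast_le.mpr (by omega)
  have hblameM : ∀ j, 1 ≤ j → ∀ m ∈ M.recvOmit p j, m.sender ∈ F'M := by
    intro j hj m hm
    simp only [hMdef, mExec_recvOmit, Set.mem_setOf_eq] at hm
    obtain ⟨hm1, hm2, hm3⟩ := hm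
    rcases hm3 with ⟨-, hsB, hk⟩ | ⟨hpC', -⟩
    · by_cases hsC : m.sender ∈ C
      · left
        refine ⟨Or.inr hsC, ?_⟩
        intro h
        rw [Set.mem_singleton_iff] at h
        exact hpC (h ▸ hsC)
      · right
        have hmΦ : m ∈ FM := by
          refine hfinM.mem_toFinset.mpr ⟨m.sender, ?_, j, hj, hm1⟩
          simp only [hMdef, mExec_faulty, Set.mem_union]
          rintro (h | h)
          · exact hsB h
          · exact hsC h
        exact Finset.mem_image.mpr ⟨m, Finset.mem_filter.mpr ⟨hmΦ, hm2⟩, rfl⟩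
    · exact absurd hpC' hpC
  have hfsubM : ∀ i ∈ M.faulty, i ≠ p → i ∈ F'M := by
    intro i hi hip
    left
    refine ⟨?_, by simpa using hip⟩
    simpa [hMdef, mExec_faulty] using hi
  obtain ⟨M', hM'e, hM'f, hM'st⟩ :=
    deisolate M hMexec p F'M hcardF'M (fun _ _ _ => rfl) hfsubM hblameM
  have hpF'M : p ∉ F'M := by
    rintro (⟨-, hp2⟩ | hp2)
    · exact hp2 rfl
    · exact hSpM_not p hp2 (Or.inl hpB)
  set F'1 : Set (Fin n) := (B \ {p}) ∪ ↑Sp1 with hF'1def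
  have hcardF'1 : F'1.encard ≤ (t : ℕ∞) := by
    refine (Set.encard_union_le _ _).trans ?_
    have h1 : (B \ {p}).encard ≤ ((2 * s : ℕ) : ℕ∞) := by
      rw [← hBe]; exact Set.encard_le_encard Set.diff_subset
    have h2 : (↑Sp1 : Set (Fin n)).encard ≤ ((2 * s : ℕ) : ℕ∞) := by
      rw [Set.encard_coe_eq_coe_finsetCard]
      exact Nat.cast_le.mpr hSp1card.le
    refine (add_le_add h1 h2).trans ?_
    rw [← Nat.cast_add]
    exact Nat.cast_le.mpr (by omega)
  have hblame1 : ∀ j, 1 ≤ j → ∀ m ∈ E₁.recvOmit p j, m.sender ∈ F'1 := by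
    intro j hj m hm
    rw [(hiso₁.2.2 p hpB).2.2 j hj] at hm
    obtain ⟨hm1, hm2, hm3, hm4⟩ := hm
    right
    refine Finset.mem_image.mpr ⟨m, Finset.mem_filter.mpr ⟨?_, hm1⟩, rfl⟩
    exact hfin1.mem_toFinset.mpr ⟨m.sender, by rw [hf₁]; exact hm2, j, hj, hm4⟩
  have hfsub1 : ∀ i ∈ E₁.faulty, i ≠ p → i ∈ F'1 := by
    intro i hi hip
    left
    exact ⟨hf₁ ▸ hi, by simpa using hip⟩
  obtain ⟨E₁', hE₁'e, hE₁'f, hE₁'st⟩ := deisolate E₁ hE₁ p F'1 hcardF'1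
    (fun i j hj => iso_sendOmit hE₁ hf₁ hiso₁ hj) hfsub1 hblame1
  have hpF'1 : p ∉ F'1 := by
    rintro (⟨-, hp2⟩ | hp2)
    · exact hp2 rfl
    · exact hSp1_not p hp2 hpB
  -- a correct process of M outside everything on the B side
  have hSpMe : (↑SpM : Set (Fin n)).encard ≤ ((2 * s : ℕ) : ℕ∞) := by
    rw [Set.encard_coe_eq_coe_finsetCard]
    exact Nat.cast_le.mpr hSpMcard.le
  have hUM : (B ∪ C ∪ (↑SpM : Set (Fin n))).encard < (n : ℕ∞) := by
    refine lt_of_le_of_lt ((Set.encard_union_le _ _).trans (add_le_add hBCe hSpMe)) ?_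
    rw [← Nat.cast_add]
    exact Nat.cast_lt.mpr (by omega)
  obtain ⟨a, ha⟩ := exists_notMem_of_encard_lt hUM
  have haM : a ∉ M.faulty := by
    simp only [hMdef, mExec_faulty]
    exact fun h => ha (Or.inl h)
  have haF'M : a ∉ F'M := by
    rintro (⟨h1, -⟩ | h1)
    · exact ha (Or.inl h1)
    · exact ha (Or.inr h1)
  obtain ⟨β, hβ⟩ := (hA M hMexec).1 a haM
  obtain ⟨γ, hγ⟩ := (hA M' hM'e).1 p (by rw [hM'f]; exact hpF'M)
  have hβ' : Decides ⊤ M' a β := decides_of_st_eq hM'st hβ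
  have hγβ : γ = β := (hA M' hM'e).2.1 p a γ β
    (by rw [hM'f]; exact hpF'M) (by rw [hM'f]; exact haF'M) hγ hβ'
  obtain ⟨j, hj, hdec⟩ := hγ
  have hstp : M'.st p j = E₁'.st p j := by
    rw [hM'st, hE₁'st]
    exact ((hviews j hj.1 p).1 hpB).1
  have hγ1 : Decides ⊤ E₁' p γ := ⟨j, hj, by rw [← hstp]; exact hdec⟩
  have hSp1e : (↑Sp1 : Set (Fin n)).encard ≤ ((2 * s : ℕ) : ℕ∞) := by
    rw [Set.encard_coe_eq_coe_finsetCard]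
    exact Nat.cast_le.mpr hSp1card.le
  have hU1 : (B ∪ (↑Sp1 : Set (Fin n))).encard < (n : ℕ∞) := by
    refine lt_of_le_of_lt ((Set.encard_union_le _ _).trans (add_le_add hBe.le hSp1e)) ?_
    rw [← Nat.cast_add]
    exact Nat.cast_lt.mpr (by omega)
  obtain ⟨r, hr⟩ := exists_notMem_of_encard_lt hU1
  have hr1 : r ∉ E₁.faulty := by
    rw [hf₁]; exact fun h => hr (Or.inl h)
  have hrF'1 : r ∉ F'1 := by
    rintro (⟨h1, -⟩ | h1)
    · exact hr (Or.inl h1)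
    · exact hr (Or.inr h1)
  obtain ⟨δ, hδ⟩ := (hA E₁ hE₁).1 r hr1
  have hδb : δ = b₁ := (hA E₁ hE₁).2.1 r a₁ δ b₁ hr1
    (by rw [hf₁]; exact Set.disjoint_left.mp hAB ha₁) hδ hd₁
  have hδ' : Decides ⊤ E₁' r δ := decides_of_st_eq hE₁'st hδ
  have hγδ : γ = δ := (hA E₁' hE₁'e).2.1 p r γ δ
    (by rw [hE₁'f]; exact hpF'1) (by rw [hE₁'f]; exact hrF'1) hγ1 hδ'
  have hβ1 : β = b₁ := by rw [← hγβ, hγδ, hδb]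
  -- ===== C side: find q ∈ C with few incoming messages =====
  obtain ⟨q, hqCf, hqcard⟩ :=
    pigeonhole_receiver s C.toFinite.toFinset hCfc FM F2 hcardFM hcardF2
  have hqC : q ∈ C := C.toFinite.mem_toFinset.mp hqCf
  have hqB : q ∉ B := Set.disjoint_right.mp hBC hqC
  set SqM := (FM.filter (fun m => m.receiver = q)).image Message.sender with hSqMdef
  set Sq2 := (F2.filter (fun m => m.receiver = q)).image Message.sender with hSq2def
  have hSqMcard : SqM.card < 2 * s :=
    lt_of_le_of_lt Finset.card_image_le (by omega)
  have hSq2card : Sq2.card < 2 * s :=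
    lt_of_le_of_lt Finset.card_image_le (by omega)
  have hSqM_not : ∀ x ∈ SqM, x ∉ B ∪ C := by
    intro x hx
    obtain ⟨m, hm, rfl⟩ := Finset.mem_image.mp hx
    have hmF := (Finset.mem_filter.mp hm).1
    obtain ⟨i, hiF, j, hj, hms⟩ := hfinM.mem_toFinset.mp hmF
    have hsender : m.sender = i := ((mS_wf A B C k₁ k₂ b j hj i).2.2.1 m hms).1
    rw [hsender]
    simpa [hMdef, mExec_faulty] using hiF
  have hSq2_not : ∀ x ∈ Sq2, x ∉ C := by
    intro x hx
    obtain ⟨m, hm, rfl⟩ := Finset.mem_image.mp hx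
    have hmF := (Finset.mem_filter.mp hm).1
    obtain ⟨i, hiF, j, hj, hms⟩ := hfin2.mem_toFinset.mp hmF
    have hsender : m.sender = i := ((hE₂.2.2.2.1 i j (ihTop hj)).2.2.1 m (Or.inl hms)).1
    rw [hf₂] at hiF
    rw [hsender]
    exact hiF
  set F'Mq : Set (Fin n) := ((B ∪ C) \ {q}) ∪ ↑SqM with hF'Mqdef
  have hcardF'Mq : F'Mq.encard ≤ (t : ℕ∞) := by
    refine (Set.encard_union_le _ _).trans ?_
    have h1 : ((B ∪ C) \ {q}).encard ≤ ((4 * s : ℕ) : ℕ∞) :=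
      (Set.encard_le_encard Set.diff_subset).trans hBCe
    have h2 : (↑SqM : Set (Fin n)).encard ≤ ((2 * s : ℕ) : ℕ∞) := by
      rw [Set.encard_coe_eq_coe_finsetCard]
      exact Nat.cast_le.mpr hSqMcard.le
    refine (add_le_add h1 h2).trans ?_
    rw [← Nat.cast_add]
    exact Nat.cast_le.mpr (by omega)
  have hblameMq : ∀ j, 1 ≤ j → ∀ m ∈ M.recvOmit q j, m.sender ∈ F'Mq := by
    intro j hj m hm
    simp only [hMdef, mExec_recvOmit, Set.mem_setOf_eq] at hm
    obtain ⟨hm1, hm2, hm3⟩ := hm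
    rcases hm3 with ⟨hqB', -⟩ | ⟨-, hsC, hk⟩
    · exact absurd hqB' hqB
    · by_cases hsB : m.sender ∈ B
      · left
        refine ⟨Or.inl hsB, ?_⟩
        intro h
        rw [Set.mem_singleton_iff] at h
        exact hqB (h ▸ hsB)
      · right
        have hmΦ : m ∈ FM := by
          refine hfinM.mem_toFinset.mpr ⟨m.sender, ?_, j, hj, hm1⟩
          simp only [hMdef, mExec_faulty, Set.mem_union]
          rintro (h | h)
          · exact hsB h
          · exact hsC h
        exact Finset.mem_image.mpr ⟨m, Finset.mem_filter.mpr ⟨hmΦ, hm2⟩, rfl⟩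
  have hfsubMq : ∀ i ∈ M.faulty, i ≠ q → i ∈ F'Mq := by
    intro i hi hiq
    left
    refine ⟨?_, by simpa using hiq⟩
    simpa [hMdef, mExec_faulty] using hi
  obtain ⟨M'', hM''e, hM''f, hM''st⟩ :=
    deisolate M hMexec q F'Mq hcardF'Mq (fun _ _ _ => rfl) hfsubMq hblameMq
  have hqF'Mq : q ∉ F'Mq := by
    rintro (⟨-, hq2⟩ | hq2)
    · exact hq2 rfl
    · exact hSqM_not q hq2 (Or.inr hqC)
  set F'2 : Set (Fin n) := (C \ {q}) ∪ ↑Sq2 with hF'2def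
  have hcardF'2 : F'2.encard ≤ (t : ℕ∞) := by
    refine (Set.encard_union_le _ _).trans ?_
    have h1 : (C \ {q}).encard ≤ ((2 * s : ℕ) : ℕ∞) := by
      rw [← hCe]; exact Set.encard_le_encard Set.diff_subset
    have h2 : (↑Sq2 : Set (Fin n)).encard ≤ ((2 * s : ℕ) : ℕ∞) := by
      rw [Set.encard_coe_eq_coe_finsetCard]
      exact Nat.cast_le.mpr hSq2card.le
    refine (add_le_add h1 h2).trans ?_
    rw [← Nat.cast_add]
    exact Nat.cast_le.mpr (by omega)
  have hblame2 : ∀ j, 1 ≤ j → ∀ m ∈ E₂.recvOmit q j, m.sender ∈ F'2 := by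
    intro j hj m hm
    rw [(hiso₂.2.2 q hqC).2.2 j hj] at hm
    obtain ⟨hm1, hm2, hm3, hm4⟩ := hm
    right
    refine Finset.mem_image.mpr ⟨m, Finset.mem_filter.mpr ⟨?_, hm1⟩, rfl⟩
    exact hfin2.mem_toFinset.mpr ⟨m.sender, by rw [hf₂]; exact hm2, j, hj, hm4⟩
  have hfsub2 : ∀ i ∈ E₂.faulty, i ≠ q → i ∈ F'2 := by
    intro i hi hiq
    left
    exact ⟨hf₂ ▸ hi, by simpa using hiq⟩
  obtain ⟨E₂', hE₂'e, hE₂'f, hE₂'st⟩ := deisolate E₂ hE₂ q F'2 hcardF'2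
    (fun i j hj => iso_sendOmit hE₂ hf₂ hiso₂ hj) hfsub2 hblame2
  have hqF'2 : q ∉ F'2 := by
    rintro (⟨-, hq2⟩ | hq2)
    · exact hq2 rfl
    · exact hSq2_not q hq2 hqC
  have hSqMe : (↑SqM : Set (Fin n)).encard ≤ ((2 * s : ℕ) : ℕ∞) := by
    rw [Set.encard_coe_eq_coe_finsetCard]
    exact Nat.cast_le.mpr hSqMcard.le
  have hUMq : (B ∪ C ∪ (↑SqM : Set (Fin n))).encard < (n : ℕ∞) := by
    refine lt_of_le_of_lt ((Set.encard_union_le _ _).trans (add_le_add hBCe hSqMe)) ?_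
    rw [← Nat.cast_add]
    exact Nat.cast_lt.mpr (by omega)
  obtain ⟨a', ha'⟩ := exists_notMem_of_encard_lt hUMq
  have ha'M : a' ∉ M.faulty := by
    simp only [hMdef, mExec_faulty]
    exact fun h => ha' (Or.inl h)
  have ha'F'Mq : a' ∉ F'Mq := by
    rintro (⟨h1, -⟩ | h1)
    · exact ha' (Or.inl h1)
    · exact ha' (Or.inr h1)
  obtain ⟨β', hβ'2⟩ := (hA M hMexec).1 a' ha'M
  have hββ' : β = β' := (hA M hMexec).2.1 a a' β β' haM ha'M hβ hβ'2
  obtain ⟨γ', hγ'⟩ := (hA M'' hM''e).1 q (by rw [hM''f]; exact hqF'Mq)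
  have hβ'' : Decides ⊤ M'' a' β' := decides_of_st_eq hM''st hβ'2
  have hγβ' : γ' = β' := (hA M'' hM''e).2.1 q a' γ' β'
    (by rw [hM''f]; exact hqF'Mq) (by rw [hM''f]; exact ha'F'Mq) hγ' hβ''
  obtain ⟨j', hj', hdec'⟩ := hγ'
  have hstq : M''.st q j' = E₂'.st q j' := by
    rw [hM''st, hE₂'st]
    exact ((hviews j' hj'.1 q).2.1 hqC).1
  have hγ2 : Decides ⊤ E₂' q γ' := ⟨j', hj', by rw [← hstq]; exact hdec'⟩
  have hSq2e : (↑Sq2 : Set (Fin n)).encard ≤ ((2 * s : ℕ) : ℕ∞) := by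
    rw [Set.encard_coe_eq_coe_finsetCard]
    exact Nat.cast_le.mpr hSq2card.le
  have hU2 : (C ∪ (↑Sq2 : Set (Fin n))).encard < (n : ℕ∞) := by
    refine lt_of_le_of_lt ((Set.encard_union_le _ _).trans (add_le_add hCe.le hSq2e)) ?_
    rw [← Nat.cast_add]
    exact Nat.cast_lt.mpr (by omega)
  obtain ⟨r', hr'⟩ := exists_notMem_of_encard_lt hU2
  have hr2 : r' ∉ E₂.faulty := by
    rw [hf₂]; exact fun h => hr' (Or.inl h)
  have hr'F'2 : r' ∉ F'2 := by
    rintro (⟨h1, -⟩ | h1)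
    · exact hr' (Or.inl h1)
    · exact hr' (Or.inr h1)
  obtain ⟨δ', hδ2⟩ := (hA E₂ hE₂).1 r' hr2
  have hδ'b : δ' = b₂ := (hA E₂ hE₂).2.1 r' a₂ δ' b₂ hr2
    (by rw [hf₂]; exact Set.disjoint_left.mp hAC ha₂) hδ2 hd₂
  have hδ2' : Decides ⊤ E₂' r' δ' := decides_of_st_eq hE₂'st hδ2
  have hγδ' : γ' = δ' := (hA E₂' hE₂'e).2.1 q r' γ' δ'
    (by rw [hE₂'f]; exact hqF'2) (by rw [hE₂'f]; exact hr'F'2) hγ2 hδ2'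
  have hβ2 : β' = b₂ := by rw [← hγβ', hγδ', hδ'b]
  rw [← hβ1, hββ', hβ2]
end

section
/- Let n, t ∈ ℕ with 8 ≤ t < n and t divisible by 8, let 𝒜 solve weak consensus in the omission model with message complexity strictly less than t²/32, let (A, B, C) be a partition of Π with |B| = |C| = t/4, and suppose every process of A decides 1 in E_0^{B(1)}. Then there exists a round R ∈ ℕ such that every process of A decides 1 in E_0^{B(R)} and every process of A decides 0 in E_0^{B(R+1)}. -/
section CriticalRoundAux

variable {n : ℕ}

lemma horizon_top {j : ℕ} (hj : 1 ≤ j) : InHorizon (⊤ : ℕ∞) j := ⟨hj, le_top⟩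

/-- The failure-free all-`false` run: `ffg A j i` is the state of `i` in
round `j+1` together with the set of messages it sends in round `j+1`. -/
noncomputable def ffg (A : Algorithm n Bool Bool) : ℕ → Fin n → A.St × Set (Message n)
  | 0 => fun i => (A.init i false, A.initMsgs i false)
  | (j+1) => fun i =>
      A.trans (ffg A j i).1 {m | m.receiver = i ∧ m ∈ (ffg A j m.sender).2}

lemma ffg_inv (A : Algorithm n Bool Bool) (j : ℕ) (i : Fin n) :
    A.proc (ffg A j i).1 = i ∧ A.rnd (ffg A j i).1 = j + 1 ∧
    (∀ m ∈ (ffg A j i).2, m.sender = i ∧ m.round = j + 1) ∧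
    (∀ m ∈ (ffg A j i).2, ∀ m' ∈ (ffg A j i).2, m.receiver = m'.receiver → m = m') := by
  induction j generalizing i with
  | zero =>
      refine ⟨A.init_proc i false, A.init_rnd i false, ?_, A.initMsgs_uniq i false⟩
      exact fun m hm => ⟨A.initMsgs_sender i false m hm, A.initMsgs_round i false m hm⟩
  | succ j ih =>
      have hv : ValidRecv A.proc A.rnd (ffg A j i).1
          {m | m.receiver = i ∧ m ∈ (ffg A j m.sender).2} := by
        constructor
        · rintro m ⟨hrec, hmem⟩
          exact ⟨hrec.trans (ih i).1.symm,
            ((ih m.sender).2.2.1 m hmem).2.trans (ih i).2.1.symm⟩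
        · rintro m ⟨hrec, hmem⟩ m' ⟨hrec', hmem'⟩ hs
          have hmem'' : m' ∈ (ffg A j m.sender).2 := by rw [hs]; exact hmem'
          exact (ih m.sender).2.2.2 m hmem m' hmem'' (hrec.trans hrec'.symm)
      obtain ⟨h1, h2, -, -, h5, h6⟩ := A.trans_ok _ _ hv
      simp only [ffg]
      refine ⟨by rw [h1]; exact (ih i).1, by rw [h2, (ih i).2.1], ?_, h6⟩
      intro m hm
      exact ⟨(h5 m hm).1.trans (ih i).1, (h5 m hm).2.trans (by rw [(ih i).2.1])⟩

/-- The failure-free execution in which every process proposes `false`. -/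
noncomputable def ffExec (A : Algorithm n Bool Bool) : Exec A where
  faulty := ∅
  st := fun i j => (ffg A (j - 1) i).1
  sent := fun i j => (ffg A (j - 1) i).2
  sendOmit := fun _ _ => ∅
  recvd := fun i j => {m | m.receiver = i ∧ m ∈ (ffg A (j - 1) m.sender).2}
  recvOmit := fun _ _ => ∅

lemma ffExec_proposes (A : Algorithm n Bool Bool) (i : Fin n) :
    Proposes (ffExec A) i false := by
  show A.prop ((ffg A 0 i).1) = false
  simp only [ffg]
  exact A.init_prop i false

lemma ffExec_isExec (t : ℕ) (A : Algorithm n Bool Bool) : IsExec t A ⊤ (ffExec A) := by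
  refine ⟨by simp [ffExec], ?_, ?_, ?_, ?_, ?_, ?_⟩
  · intro _ i
    refine ⟨false, rfl, ?_⟩
    show (ffg A 0 i).2 ∪ ∅ = A.initMsgs i false
    simp [ffg]
  · intro i j hj _
    obtain ⟨j, rfl⟩ : ∃ j', j = j' + 1 := ⟨j - 1, (Nat.succ_pred_eq_of_pos hj).symm⟩
    show A.trans ((ffg A j i).1) {m | m.receiver = i ∧ m ∈ (ffg A j m.sender).2}
        = ((ffg A (j + 1) i).1, (ffg A (j + 1) i).2 ∪ ∅)
    rw [Set.union_empty]
    rfl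
  · intro i j hj
    obtain ⟨j, rfl⟩ : ∃ j', j = j' + 1 := ⟨j - 1, (Nat.succ_pred_eq_of_pos hj.1).symm⟩
    have inv := ffg_inv A j
    refine ⟨(inv i).1, (inv i).2.1, ?_, ?_, by simp [ffExec], by simp [ffExec], ?_, ?_⟩
    · intro m hm
      have hm' : m ∈ (ffg A j i).2 := by simpa [ffExec] using hm
      exact (inv i).2.2.1 m hm'
    · intro m hm
      have hm' : m.receiver = i ∧ m ∈ (ffg A j m.sender).2 := by simpa [ffExec] using hm
      exact ⟨hm'.1, ((inv m.sender).2.2.1 m hm'.2).2⟩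
    · intro m hm m' hm' hrr
      have h1 : m ∈ (ffg A j i).2 := by simpa [ffExec] using hm
      have h2 : m' ∈ (ffg A j i).2 := by simpa [ffExec] using hm'
      exact (inv i).2.2.2 m h1 m' h2 hrr
    · intro m hm m' hm' hs
      have h1 : m.receiver = i ∧ m ∈ (ffg A j m.sender).2 := by simpa [ffExec] using hm
      have h2 : m'.receiver = i ∧ m' ∈ (ffg A j m'.sender).2 := by simpa [ffExec] using hm'
      have h2' : m' ∈ (ffg A j m.sender).2 := by rw [hs]; exact h2.2
      exact (inv m.sender).2.2.2 m h1.2 m' h2' (h1.1.trans h2.1.symm)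
  · intro i j hj m hm
    obtain ⟨j, rfl⟩ : ∃ j', j = j' + 1 := ⟨j - 1, (Nat.succ_pred_eq_of_pos hj.1).symm⟩
    have hm' : m ∈ (ffg A j i).2 := hm
    have hs := ((ffg_inv A j i).2.2.1 m hm').1
    refine Set.mem_union_left _ ?_
    refine ⟨rfl, ?_⟩
    rw [hs]; exact hm'
  · intro i j hj m hm
    have hm' : m.receiver = i ∧ m ∈ (ffg A (j - 1) m.sender).2 := by
      simpa [ffExec] using hm
    exact hm'.2
  · rintro i ⟨j, -, h | h⟩ <;> simp [ffExec] at h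

/-- The characterizing conditions of `E_0^{B(k)}`. -/
def Cond (t : ℕ) {A : Algorithm n Bool Bool} (B : Set (Fin n)) (k : ℕ)
    (E : Exec A) : Prop :=
  IsExec t A ⊤ E ∧ (∀ i, Proposes E i false) ∧ E.faulty = B ∧ IsolatedFrom t E B k

lemma cond_sendOmit {t : ℕ} {A : Algorithm n Bool Bool} {B : Set (Fin n)} {k : ℕ}
    {E : Exec A} (h : Cond t B k E) (i : Fin n) (j : ℕ) (hj : 1 ≤ j) :
    E.sendOmit i j = ∅ := by
  by_cases hi : i ∈ B
  · exact (h.2.2.2.2.2 i hi).2.1 j hj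
  · by_contra hne
    exact hi (h.2.2.1 ▸ h.1.2.2.2.2.2.2 i ⟨j, horizon_top hj, Or.inl hne⟩)

lemma cond_recvOmit_mem {t : ℕ} {A : Algorithm n Bool Bool} {B : Set (Fin n)} {k : ℕ}
    {E : Exec A} (h : Cond t B k E) {i : Fin n} (hi : i ∈ B) (j : ℕ) (hj : 1 ≤ j) :
    E.recvOmit i j
      = {m | m.receiver = i ∧ m.sender ∉ B ∧ k ≤ j ∧ m ∈ E.sent m.sender j} :=
  (h.2.2.2.2.2 i hi).2.2 j hj

lemma cond_recvOmit_not {t : ℕ} {A : Algorithm n Bool Bool} {B : Set (Fin n)} {k : ℕ}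
    {E : Exec A} (h : Cond t B k E) {i : Fin n} (hi : i ∉ B) (j : ℕ) (hj : 1 ≤ j) :
    E.recvOmit i j = ∅ := by
  by_contra hne
  exact hi (h.2.2.1 ▸ h.1.2.2.2.2.2.2 i ⟨j, horizon_top hj, Or.inr hne⟩)

lemma recvd_eq {t : ℕ} {A : Algorithm n Bool Bool} {E : Exec A}
    (hE : IsExec t A ⊤ E) (i : Fin n) (j : ℕ) (hj : 1 ≤ j) :
    E.recvd i j
      = {m : Message n | m.receiver = i ∧ m ∈ E.sent m.sender j} \ E.recvOmit i j := by
  obtain ⟨-, -, -, hwf, hsv, hrv, -⟩ := hE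
  ext m
  constructor
  · intro hm
    have hmem : m ∈ E.recvd i j ∪ E.recvOmit i j := Or.inl hm
    refine ⟨⟨((hwf i j (horizon_top hj)).2.2.2.1 m hmem).1,
      hrv i j (horizon_top hj) m hmem⟩, ?_⟩
    intro hro
    have hdisj := (hwf i j (horizon_top hj)).2.2.2.2.2.1
    have hmm : m ∈ E.recvd i j ∩ E.recvOmit i j := ⟨hm, hro⟩
    rw [hdisj] at hmm
    exact hmm
  · rintro ⟨⟨hrec, hsent⟩, hro⟩
    have h := hsv m.sender j (horizon_top hj) m hsent
    rw [hrec] at h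
    rcases h with h | h
    · exact h
    · exact absurd h hro

/-- The key induction: two executions with all-`false` proposals, no send
omissions and (up to round `J`) equal receive omissions have the same states
and sent sets up to round `J`. -/
lemma agree_core {t t' : ℕ} {A : Algorithm n Bool Bool} {E E' : Exec A}
    (hE : IsExec t A ⊤ E) (hE' : IsExec t' A ⊤ E')
    (hp : ∀ i, Proposes E i false) (hp' : ∀ i, Proposes E' i false)
    (hso : ∀ i j, 1 ≤ j → E.sendOmit i j = ∅)
    (hso' : ∀ i j, 1 ≤ j → E'.sendOmit i j = ∅)
    (J : ℕ)
    (hro : ∀ i j, 1 ≤ j → j < J →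
      (∀ i', E.sent i' j = E'.sent i' j) → E.recvOmit i j = E'.recvOmit i j) :
    ∀ j, 1 ≤ j → j ≤ J → ∀ i, E.st i j = E'.st i j ∧ E.sent i j = E'.sent i j := by
  intro j
  induction j with
  | zero => intro h; exact absurd h (by simp)
  | succ j ih =>
    intro _ hJ i
    rcases Nat.eq_zero_or_pos j with rfl | hj
    · obtain ⟨v, hst, hsnd⟩ := hE.2.1 le_top i
      obtain ⟨v', hst', hsnd'⟩ := hE'.2.1 le_top i
      have hv : v = false := by have h := hp i; rwa [Proposes, hst, A.init_prop] at h
      have hv' : v' = false := by have h := hp' i; rwa [Proposes, hst', A.init_prop] at h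
      subst hv hv'
      refine ⟨by rw [hst, hst'], ?_⟩
      have e1 : E.sent i 1 = A.initMsgs i false := by
        rw [← hsnd]
        rw [hso i 1 le_rfl, Set.union_empty]
      have e2 : E'.sent i 1 = A.initMsgs i false := by
        rw [← hsnd']
        rw [hso' i 1 le_rfl, Set.union_empty]
      rw [e1, e2]
    · have hjJ : j ≤ J := le_trans (Nat.le_succ j) hJ
      have hsent : ∀ i', E.sent i' j = E'.sent i' j := fun i' => (ih hj hjJ i').2
      have hstj : E.st i j = E'.st i j := (ih hj hjJ i).1
      have hrecv : E.recvd i j = E'.recvd i j := by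
        rw [recvd_eq hE i j hj, recvd_eq hE' i j hj,
          hro i j hj (lt_of_lt_of_le (Nat.lt_succ_self j) hJ) hsent]
        have : {m : Message n | m.receiver = i ∧ m ∈ E.sent m.sender j}
            = {m : Message n | m.receiver = i ∧ m ∈ E'.sent m.sender j} := by
          ext m; simp [hsent m.sender]
        rw [this]
      have htr := hE.2.2.1 i j hj le_top
      have htr' := hE'.2.2.1 i j hj le_top
      rw [hstj, hrecv, htr'] at htr
      refine ⟨(congrArg Prod.fst htr).symm, ?_⟩
      have h2 := congrArg Prod.snd htr
      simp only at h2
      rw [hso i (j + 1) (by omega), hso' i (j + 1) (by omega),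
        Set.union_empty, Set.union_empty] at h2
      exact h2.symm

lemma cond_st_eq {t : ℕ} {A : Algorithm n Bool Bool} {B : Set (Fin n)} {k : ℕ}
    {E E' : Exec A} (h : Cond t B k E) (h' : Cond t B k E') :
    ∀ j, 1 ≤ j → ∀ i, E.st i j = E'.st i j := by
  intro j hj i
  refine (agree_core h.1 h'.1 h.2.1 h'.2.1 (fun i j hj => cond_sendOmit h i j hj)
    (fun i j hj => cond_sendOmit h' i j hj) j ?_ j hj le_rfl i).1
  intro i j' hj' _ hsent
  by_cases hi : i ∈ B
  · rw [cond_recvOmit_mem h hi j' hj', cond_recvOmit_mem h' hi j' hj']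
    ext m; simp [hsent m.sender]
  · rw [cond_recvOmit_not h hi j' hj', cond_recvOmit_not h' hi j' hj']

lemma cond_ff_st_eq {t : ℕ} {A : Algorithm n Bool Bool} {B : Set (Fin n)} {k : ℕ}
    {E : Exec A} (h : Cond t B k E) :
    ∀ j, 1 ≤ j → j ≤ k → ∀ i, E.st i j = (ffExec A).st i j := by
  intro j hj hjk i
  refine (agree_core h.1 (ffExec_isExec t A) h.2.1 (fun i => ffExec_proposes A i)
    (fun i j hj => cond_sendOmit h i j hj) (fun _ _ _ => rfl) k ?_ j hj hjk i).1
  intro i j' hj' hj'k _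
  by_cases hi : i ∈ B
  · rw [cond_recvOmit_mem h hi j' hj']
    show _ = (∅ : Set (Message n))
    ext m; simp [Nat.not_le.mpr hj'k]
  · rw [cond_recvOmit_not h hi j' hj']; rfl

lemma isolated_zero {t : ℕ} {A : Algorithm n Bool Bool} {E : Exec A} {B : Set (Fin n)}
    (h : IsolatedFrom t E B 0) : IsolatedFrom t E B 1 := by
  obtain ⟨h1, h2, h3⟩ := h
  refine ⟨h1, h2, fun g hg => ⟨(h3 g hg).1, (h3 g hg).2.1, fun j hj => ?_⟩⟩
  rw [(h3 g hg).2.2 j hj]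
  ext m; simp [hj, Nat.zero_le]

/-- All processes of `Agrp` decide `b` in every execution satisfying the
characterizing conditions of `E_0^{B(k)}`. -/
def DecAll (t : ℕ) (A : Algorithm n Bool Bool) (B Agrp : Set (Fin n)) (k : ℕ)
    (b : Bool) : Prop :=
  ∀ E : Exec A, IsExec t A ⊤ E → (∀ i, Proposes E i false) →
    E.faulty = B → IsolatedFrom t E B k → ∀ a ∈ Agrp, Decides ⊤ E a b

end CriticalRoundAux

/-- Let `A` solve weak consensus with message complexity
`< t²/32`, let `(Agrp, B, C)` partition `Π` with `|B| = |C| = t/4`, and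
suppose every process of `Agrp` decides `1` in `E_0^{B(1)}`.  Then there is a
round `R` such that every process of `Agrp` decides `1` in `E_0^{B(R)}` and
every process of `Agrp` decides `0` in `E_0^{B(R+1)}`.  (Here `E_0^{B(k)}` is
characterized as an infinite execution in which all processes propose `0`,
the faulty set is `B`, and `B` is isolated from round `k`.) -/
theorem critical_round_exists
    (n t : ℕ) (ht8 : 8 ≤ t) (htn : t < n) (hdvd : 8 ∣ t)
    (A : Algorithm n Bool Bool) (hA : SolvesWeakConsensus t A)
    (hcomp : MsgComplexity t A < ((t ^ 2 / 32 : ℕ) : ℕ∞))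
    (Agrp B C : Set (Fin n))
    (hunion : Agrp ∪ B ∪ C = Set.univ)
    (hAB : Disjoint Agrp B) (hAC : Disjoint Agrp C) (hBC : Disjoint B C)
    (hB : B.ncard = t / 4) (hC : C.ncard = t / 4)
    -- every process of `Agrp` decides `1` in `E_0^{B(1)}`
    (h1 : ∀ E : Exec A, IsExec t A ⊤ E → (∀ i, Proposes E i false) →
      E.faulty = B → IsolatedFrom t E B 1 → ∀ a ∈ Agrp, Decides ⊤ E a true) :
    ∃ R : ℕ,
      -- every process of `Agrp` decides `1` in `E_0^{B(R)}`
      (∀ E : Exec A, IsExec t A ⊤ E → (∀ i, Proposes E i false) →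
        E.faulty = B → IsolatedFrom t E B R → ∀ a ∈ Agrp, Decides ⊤ E a true) ∧
      -- every process of `Agrp` decides `0` in `E_0^{B(R+1)}`
      (∀ E : Exec A, IsExec t A ⊤ E → (∀ i, Proposes E i false) →
        E.faulty = B → IsolatedFrom t E B (R + 1) → ∀ a ∈ Agrp, Decides ⊤ E a false) := by
  classical
  -- In the failure-free execution everyone proposes `false`, so by Weak
  -- Validity and Termination every process decides `false` at some round.
  have hffE := ffExec_isExec t A
  obtain ⟨hterm, -, hval⟩ := hA _ hffE
  have hnotrue : ∀ i, ¬ Decides ⊤ (ffExec A) i true := by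
    have h := hval rfl false (fun i => ffExec_proposes A i)
    simpa using h
  have hdecff : ∀ i : Fin n, ∃ j, InHorizon (⊤ : ℕ∞) j ∧
      A.dec ((ffExec A).st i j) = some false := by
    intro i
    obtain ⟨b, hb⟩ := hterm i (by simp [ffExec])
    cases b with
    | true => exact absurd hb (hnotrue i)
    | false => exact hb
  choose jf hjf1 hjf2 using hdecff
  set K : ℕ := (Finset.univ.sup jf) + 1 with hKdef
  -- For isolation round `K`, every process of `Agrp` decides `false`.
  have hFK : DecAll t A B Agrp K false := by
    intro E hE hp hf hiso a ha
    have hcond : Cond t B K E := ⟨hE, hp, hf, hiso⟩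
    have hle : jf a ≤ K := by
      have := Finset.le_sup (f := jf) (Finset.mem_univ a)
      omega
    have hst := cond_ff_st_eq hcond (jf a) (hjf1 a).1 hle a
    exact ⟨jf a, hjf1 a, by rw [hst]; exact hjf2 a⟩
  -- Dichotomy: for every `k`, either all of `Agrp` decide `true`, or all
  -- decide `false`, in every execution satisfying the conditions.
  have hdich : ∀ k, DecAll t A B Agrp k true ∨ DecAll t A B Agrp k false := by
    intro k
    by_cases hex : ∃ E : Exec A, Cond t B k E
    · obtain ⟨E0, hE0⟩ := hex
      by_cases hAne : ∃ a, a ∈ Agrp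
      · obtain ⟨a0, ha0⟩ := hAne
        obtain ⟨ht0, hag0, -⟩ := hA E0 hE0.1
        have hcor : ∀ a ∈ Agrp, a ∉ E0.faulty := by
          intro a ha
          rw [hE0.2.2.1]
          exact Set.disjoint_left.mp hAB ha
        obtain ⟨b0, hb0⟩ := ht0 a0 (hcor a0 ha0)
        have hall : ∀ a ∈ Agrp, Decides ⊤ E0 a b0 := by
          intro a ha
          obtain ⟨b, hb⟩ := ht0 a (hcor a ha)
          have hbb := hag0 a a0 b b0 (hcor a ha) (hcor a0 ha0) hb hb0
          rwa [hbb] at hb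
        have htrans : ∀ E : Exec A, Cond t B k E → ∀ a ∈ Agrp, Decides ⊤ E a b0 := by
          intro E hEc a ha
          obtain ⟨j, hj, hdec⟩ := hall a ha
          exact ⟨j, hj, by rw [cond_st_eq hEc hE0 j hj.1 a]; exact hdec⟩
        cases b0 with
        | true => exact Or.inl (fun E e1 e2 e3 e4 => htrans E ⟨e1, e2, e3, e4⟩)
        | false => exact Or.inr (fun E e1 e2 e3 e4 => htrans E ⟨e1, e2, e3, e4⟩)
      · exact Or.inl (fun E _ _ _ _ a ha => absurd ⟨a, ha⟩ hAne)
    · exact Or.inl (fun E e1 e2 e3 e4 a _ => absurd ⟨E, e1, e2, e3, e4⟩ hex)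
  have hT0 : DecAll t A B Agrp 0 true :=
    fun E e1 e2 e3 e4 => h1 E e1 e2 e3 (isolated_zero e4)
  have hT1 : DecAll t A B Agrp 1 true := h1
  by_cases hS : ∃ k, ¬ DecAll t A B Agrp k true
  · have hTm : ¬ DecAll t A B Agrp (Nat.find hS) true := Nat.find_spec hS
    have hm0 : Nat.find hS ≠ 0 := fun h => hTm (h ▸ hT0)
    have hFm : DecAll t A B Agrp (Nat.find hS) false :=
      (hdich (Nat.find hS)).resolve_left hTm
    refine ⟨Nat.find hS - 1, ?_, ?_⟩
    · exact not_not.mp (Nat.find_min hS (by omega))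
    · have h : Nat.find hS - 1 + 1 = Nat.find hS := by omega
      rw [h]
      exact hFm
  · push_neg at hS
    refine ⟨K - 1, hS (K - 1), ?_⟩
    have h : K - 1 + 1 = K := by omega
    rw [h]
    exact hFK
end
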